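/- arXiv:1507.08923 — 5 statements merged into one kernel-verified Lean document; each statement's English description precedes it below -/
import Mathlib

section
/- Let $a$ be an even positive integer. For each $n \ge 1$ and $1 \le i \le n$, let $t_i = \frac{i}{n} - \frac{1}{2n}$ and define $D_i^{(a)} = i \binom{n}{i} \int_0^1 |x - t_i|^a \, x^{i-1} (1-x)^{n-i} \, dx$ (the expected $a$-th power of the distance from the $i$-th order statistic of $n$ i.i.d. uniform points on $[0,1]$ to the anchor $t_i$). Then $\sum_{i=1}^{n} D_i^{(a)} = \frac{(a/2)!}{2^{a/2}(1+a)} \cdot \frac{1}{n^{a/2-1}} + O\left(\frac{1}{n^{a/2}}\right)$; that is, there exist a constant $C > 0$ and $N$ such that for all $n \ge N$, $\left| \sum_{i=1}^{n} D_i^{(a)} - \frac{(a/2)!}{2^{a/2}(1+a)} n^{1-a/2} \right| \le C \, n^{-a/2}$. -/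
/-!
Write `a = 2m`, `n = N + 1` and `i = b + 1`. Since `i·C(n,i) = n·C(N,b)` and
`x - tᵢ = ((N x - b) + (x - 1/2)) / n`, the binomial theorem turns the integrand of the sum into
`n^{1-2m} Σₖ C(2m,k) (x - 1/2)^{2m-k} μₖ(x)`, where `μₖ(x) = Σ_b C(N,b) x^b (1-x)^{N-b} (N x - b)^k`
is the `k`-th central moment of a binomial law. Romanovsky's recursion
`μₖ₊₁ = x(1-x)(k N μₖ₋₁ - μₖ')` shows that `μₖ` is a polynomial in `N` of degree at most `k/2`,
and that the coefficient of `N^m` in `μ₂ₘ` is `(2m)!/(2^m m!) · (x(1-x))^m`. Integrating over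
`[0,1]`, the sum equals `n^{1-2m} Q(n-1)` for a polynomial `Q` of degree `m` whose leading
coefficient is, by the beta integral, `m!/(2^m (2m+1))`; and `Q(n-1)` differs from its leading
term evaluated at `n` by `O(n^{m-1})`.
-/

open Polynomial Finset
open scoped Nat

theorem Polynomial.mul_abs_eval_sub_leadingCoeff_mul_pow_le (p : ℝ[X]) {x : ℝ} (hx : 1 ≤ x) :
    x * |p.eval x - p.leadingCoeff * x ^ p.natDegree|
      ≤ (∑ i ∈ range p.natDegree, |p.coeff i|) * x ^ p.natDegree := by
  rw [eval_eq_sum_range, sum_range_succ, coeff_natDegree, add_sub_cancel_right, sum_mul,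
    mul_comm]
  refine (mul_le_mul_of_nonneg_right (abs_sum_le_sum_abs _ _) (by positivity)).trans ?_
  rw [sum_mul]
  refine sum_le_sum fun i hi => ?_
  have hx0 : 0 ≤ x := zero_le_one.trans hx
  rw [abs_mul, abs_of_nonneg (pow_nonneg hx0 i), mul_assoc, ← pow_succ]
  exact mul_le_mul_of_nonneg_left (pow_le_pow_right₀ hx (mem_range.mp hi)) (abs_nonneg _)

noncomputable def unitIntervalIntegral : ℝ[X] →ₗ[ℝ] ℝ where
  toFun p := ∫ x in (0 : ℝ)..1, p.eval x
  map_add' p q := by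
    simp only [eval_add]
    exact intervalIntegral.integral_add (p.continuous.intervalIntegrable _ _)
      (q.continuous.intervalIntegrable _ _)
  map_smul' c p := by simp [intervalIntegral.integral_const_mul]

theorem unitIntervalIntegral_apply (p : ℝ[X]) :
    unitIntervalIntegral p = ∫ x in (0 : ℝ)..1, p.eval x := rfl

theorem unitIntervalIntegral_C_mul (c : ℝ) (p : ℝ[X]) :
    unitIntervalIntegral (C c * p) = c * unitIntervalIntegral p := by
  rw [← smul_eq_C_mul, map_smul, smul_eq_mul]

theorem unitIntervalIntegral_X_pow_mul_one_sub_X_pow (p r : ℕ) :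
    unitIntervalIntegral (X ^ p * (1 - X) ^ r) = p ! * r ! / (p + r + 1)! := by
  induction r generalizing p with
  | zero =>
    rw [pow_zero, mul_one, unitIntervalIntegral_apply]
    simp only [eval_pow, eval_X, integral_pow, one_pow, zero_pow p.succ_ne_zero, sub_zero,
      Nat.factorial_zero, add_zero, Nat.factorial_succ]
    push_cast
    field_simp
  | succ r ih =>
    have hsplit : (X ^ p * (1 - X) ^ (r + 1) : ℝ[X])
        = X ^ p * (1 - X) ^ r - X ^ (p + 1) * (1 - X) ^ r := by
      ring
    rw [hsplit, map_sub, ih, ih, show p + 1 + r + 1 = p + r + 1 + 1 by ring,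
      show p + (r + 1) + 1 = p + r + 1 + 1 by ring]
    simp only [Nat.factorial_succ]
    push_cast
    field_simp
    ring

theorem bernsteinPolynomial.X_mul_one_sub_X_mul_derivative {n ν : ℕ} (h : ν ≤ n) :
    X * (1 - X) * derivative (bernsteinPolynomial ℝ n ν)
      = -((C (n : ℝ) * X - C (ν : ℝ)) * bernsteinPolynomial ℝ n ν) := by
  have hX : X * derivative (X ^ ν : ℝ[X]) = C (ν : ℝ) * X ^ ν := by
    cases ν with
    | zero => simp
    | succ ν => rw [derivative_X_pow, Nat.add_sub_cancel]; ring
  have hY : (1 - X) * derivative ((1 - X) ^ (n - ν) : ℝ[X])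
      = -(C ((n - ν : ℕ) : ℝ) * (1 - X) ^ (n - ν)) := by
    cases hk : n - ν with
    | zero => simp
    | succ k =>
      rw [derivative_pow, derivative_sub, derivative_one, derivative_X, Nat.add_sub_cancel]
      ring
  rw [Nat.cast_sub h, map_sub] at hY
  simp only [bernsteinPolynomial, derivative_mul, derivative_natCast, zero_mul, zero_add]
  linear_combination (↑(n.choose ν) * (1 - X) ^ (n - ν)) * (1 - X) * hX
    + (↑(n.choose ν) * X ^ ν) * X * hY

noncomputable def binomialCentralMoment (N k : ℕ) : ℝ[X] :=
  ∑ ν ∈ range (N + 1), bernsteinPolynomial ℝ N ν * (C (N : ℝ) * X - C (ν : ℝ)) ^ k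

theorem binomialCentralMoment_zero (N : ℕ) : binomialCentralMoment N 0 = 1 := by
  simp [binomialCentralMoment, bernsteinPolynomial.sum]

theorem binomialCentralMoment_succ (N k : ℕ) :
    binomialCentralMoment N (k + 1)
      = C ((k : ℝ) * N) * (X * (1 - X)) * binomialCentralMoment N (k - 1)
        - X * (1 - X) * derivative (binomialCentralMoment N k) := by
  simp only [binomialCentralMoment, derivative_sum, mul_sum, ← sum_sub_distrib]
  refine sum_congr rfl fun ν hν => ?_
  have hb := bernsteinPolynomial.X_mul_one_sub_X_mul_derivative
    (Nat.lt_succ_iff.mp (mem_range.mp hν))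
  rw [derivative_mul, derivative_pow, derivative_sub, derivative_C_mul_X, derivative_C, sub_zero,
    map_mul]
  cases k with
  | zero => linear_combination hb
  | succ k =>
    rw [Nat.add_sub_cancel]
    linear_combination (C (N : ℝ) * X - C (ν : ℝ)) ^ (k + 1) * hb

noncomputable def centralMomentCoeff : ℕ → ℕ → ℝ[X]
  | 0, 0 => 1
  | 0, _ + 1 => 0
  | 1, _ => 0
  | k + 2, 0 => -(X * (1 - X) * derivative (centralMomentCoeff (k + 1) 0))
  | k + 2, j + 1 => X * (1 - X) * (C ((k : ℝ) + 1) * centralMomentCoeff k j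
      - derivative (centralMomentCoeff (k + 1) (j + 1)))

theorem centralMomentCoeff_eq_zero_of_lt : ∀ {k j : ℕ}, k < 2 * j → centralMomentCoeff k j = 0
  | 0, j + 1, _ => rfl
  | 1, _, _ => rfl
  | k + 2, j + 1, h => by
    rw [centralMomentCoeff, centralMomentCoeff_eq_zero_of_lt (by omega),
      centralMomentCoeff_eq_zero_of_lt (k := k + 1) (by omega)]
    simp

theorem centralMomentCoeff_two_mul_self (m : ℕ) :
    centralMomentCoeff (2 * m) m = C ((2 * m)! / (2 ^ m * m !) : ℝ) * (X * (1 - X)) ^ m := by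
  induction m with
  | zero => simp [centralMomentCoeff]
  | succ m ih =>
    have hc : ((2 * (m + 1))! / (2 ^ (m + 1) * (m + 1)!) : ℝ)
        = (2 * m + 1) * ((2 * m)! / (2 ^ m * m !)) := by
      rw [show 2 * (m + 1) = 2 * m + 1 + 1 by ring]
      simp only [Nat.factorial_succ]
      push_cast
      field_simp
      ring
    rw [hc, show 2 * (m + 1) = 2 * m + 2 by ring, centralMomentCoeff, ih,
      centralMomentCoeff_eq_zero_of_lt (by omega), derivative_zero, sub_zero, map_mul]
    push_cast
    ring

theorem binomialCentralMoment_eq_sum (N : ℕ) : ∀ {k M : ℕ}, k ≤ 2 * M →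
    binomialCentralMoment N k = ∑ j ∈ range (M + 1), C ((N : ℝ) ^ j) * centralMomentCoeff k j
  | 0, M, _ => by
    simp [binomialCentralMoment_zero, sum_range_succ', centralMomentCoeff]
  | 1, M, _ => by
    simp [binomialCentralMoment_succ N 0, binomialCentralMoment_zero, centralMomentCoeff]
  | k + 2, M + 1, h => by
    rw [binomialCentralMoment_succ, Nat.add_sub_cancel,
      binomialCentralMoment_eq_sum N (M := M) (by omega),
      binomialCentralMoment_eq_sum N (k := k + 1) (M := M + 1) (by omega), derivative_sum,
      sum_range_succ' (fun j => derivative (C ((N : ℝ) ^ j) * centralMomentCoeff (k + 1) j)),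
      sum_range_succ' (fun j => C ((N : ℝ) ^ j) * centralMomentCoeff (k + 2) j)]
    simp only [derivative_C_mul, centralMomentCoeff, mul_add, mul_sum]
    rw [← sub_sub, ← sum_sub_distrib, sub_eq_add_neg]
    congr 1
    · refine sum_congr rfl fun j _ => ?_
      simp only [map_mul, map_pow, Nat.cast_succ]
      ring
    · ring

theorem sum_Icc_mul_choose_mul (N : ℕ) (f : ℕ → ℝ) :
    ∑ i ∈ Icc 1 (N + 1), (i : ℝ) * ((N + 1).choose i) * f i
      = (N + 1) * ∑ b ∈ range (N + 1), (N.choose b : ℝ) * f (b + 1) := by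
  rw [← Ico_add_one_right_eq_Icc, sum_Ico_eq_sum_range, Nat.add_sub_cancel, mul_sum]
  refine sum_congr rfl fun b _ => ?_
  rw [add_comm 1 b]
  have h := congrArg (Nat.cast (R := ℝ)) (Nat.add_one_mul_choose_eq N b)
  push_cast at h ⊢
  linear_combination -f (b + 1) * h

theorem sum_bernsteinPolynomial_mul_X_sub_pow (N m : ℕ) :
    ∑ b ∈ range (N + 1), bernsteinPolynomial ℝ N b
        * (X - C ((2 * ((b + 1 : ℕ) : ℝ) - 1) / (2 * (N + 1)))) ^ (2 * m)
      = C (((N : ℝ) + 1) ^ (2 * m))⁻¹ * ∑ k ∈ range (2 * m + 1), C ((2 * m).choose k : ℝ)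
          * ((X - C 2⁻¹) ^ (2 * m - k) * binomialCentralMoment N k) := by
  have hsplit : ∀ b : ℕ, X - C ((2 * ((b + 1 : ℕ) : ℝ) - 1) / (2 * (N + 1)))
      = C ((N : ℝ) + 1)⁻¹ * ((C (N : ℝ) * X - C (b : ℝ)) + (X - C 2⁻¹)) := by
    intro b
    have hN : (N : ℝ) + 1 ≠ 0 := by positivity
    have hanchor : (2 * ((b + 1 : ℕ) : ℝ) - 1) / (2 * (N + 1))
        = ((N : ℝ) + 1)⁻¹ * (b + 2⁻¹) := by
      field_simp
      push_cast
      ring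
    have hunit : C ((N : ℝ) + 1)⁻¹ * C (N : ℝ) + C ((N : ℝ) + 1)⁻¹ = 1 := by
      rw [← map_mul, ← map_add, ← mul_add_one, inv_mul_cancel₀ hN, map_one]
    rw [hanchor, map_mul, map_add]
    linear_combination (-X) * hunit
  conv_lhs => simp only [hsplit, mul_pow, add_pow, mul_sum]
  simp only [binomialCentralMoment, mul_sum]
  rw [sum_comm]
  refine sum_congr rfl fun k _ => sum_congr rfl fun b _ => ?_
  rw [← map_natCast C ((2 * m).choose k), ← inv_pow, map_pow]
  ring

noncomputable def displacementCoeff (m j : ℕ) : ℝ :=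
  ∑ k ∈ range (2 * m + 1), ((2 * m).choose k : ℝ)
    * unitIntervalIntegral ((X - C 2⁻¹) ^ (2 * m - k) * centralMomentCoeff k j)

noncomputable def displacementPoly (m : ℕ) : ℝ[X] :=
  ∑ j ∈ range (m + 1), C (displacementCoeff m j) * X ^ j

theorem displacementCoeff_self (m : ℕ) :
    displacementCoeff m m = m ! / (2 ^ m * (1 + 2 * m)) := by
  rw [displacementCoeff, sum_eq_single_of_mem (2 * m) (self_mem_range_succ _)]
  · rw [Nat.choose_self, Nat.sub_self, pow_zero, one_mul, centralMomentCoeff_two_mul_self,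
      unitIntervalIntegral_C_mul, mul_pow, unitIntervalIntegral_X_pow_mul_one_sub_X_pow,
      show m + m + 1 = 2 * m + 1 by ring, Nat.factorial_succ]
    push_cast
    field_simp
    ring
  · intro k hk hne
    have hlt : k < 2 * m := by have := mem_range.mp hk; omega
    rw [centralMomentCoeff_eq_zero_of_lt hlt, mul_zero, map_zero, mul_zero]

theorem coeff_displacementPoly_self (m : ℕ) :
    (displacementPoly m).coeff m = m ! / (2 ^ m * (1 + 2 * m)) := by
  simp [displacementPoly, displacementCoeff_self]

theorem natDegree_displacementPoly (m : ℕ) : (displacementPoly m).natDegree = m := by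
  refine natDegree_eq_of_le_of_coeff_ne_zero ?_ ?_
  · exact natDegree_sum_le_of_forall_le _ _ fun j hj =>
      (natDegree_C_mul_X_pow_le _ _).trans (Nat.lt_succ_iff.mp (mem_range.mp hj))
  · rw [coeff_displacementPoly_self]
    positivity

theorem leadingCoeff_displacementPoly (m : ℕ) :
    (displacementPoly m).leadingCoeff = m ! / (2 ^ m * (1 + 2 * m)) := by
  rw [leadingCoeff, natDegree_displacementPoly, coeff_displacementPoly_self]

theorem unitIntervalIntegral_mul_binomialCentralMoment {m k : ℕ} (N : ℕ) (hk : k ≤ 2 * m)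
    (p : ℝ[X]) :
    unitIntervalIntegral (p * binomialCentralMoment N k)
      = ∑ j ∈ range (m + 1),
          (N : ℝ) ^ j * unitIntervalIntegral (p * centralMomentCoeff k j) := by
  simp only [binomialCentralMoment_eq_sum N hk, mul_sum, map_sum, mul_left_comm p,
    unitIntervalIntegral_C_mul]

theorem sum_integral_eq_eval_displacementPoly (m n : ℕ) :
    ∑ i ∈ Icc 1 n, (i : ℝ) * (n.choose i : ℝ) * ∫ x in (0 : ℝ)..1,
        (x - (2 * (i : ℝ) - 1) / (2 * n)) ^ (2 * m) * x ^ (i - 1) * (1 - x) ^ (n - i)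
      = n / n ^ (2 * m) * (displacementPoly m).eval ((n : ℝ) - 1) := by
  cases n with
  | zero => simp
  | succ N =>
    push_cast
    rw [sum_Icc_mul_choose_mul]
    have hterm : ∀ b : ℕ, (N.choose b : ℝ) * ∫ x in (0 : ℝ)..1,
          (x - (2 * ((b + 1 : ℕ) : ℝ) - 1) / (2 * (N + 1))) ^ (2 * m) * x ^ (b + 1 - 1)
            * (1 - x) ^ (N + 1 - (b + 1))
        = unitIntervalIntegral (bernsteinPolynomial ℝ N b
            * (X - C ((2 * ((b + 1 : ℕ) : ℝ) - 1) / (2 * (N + 1)))) ^ (2 * m)) := by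
      intro b
      simp only [unitIntervalIntegral_apply, bernsteinPolynomial, eval_mul, eval_pow, eval_sub,
        eval_X, eval_C, eval_one, eval_natCast, Nat.add_sub_cancel, Nat.add_sub_add_right,
        ← intervalIntegral.integral_const_mul]
      congr 1
      ext x
      ring
    rw [sum_congr rfl fun b _ => hterm b, ← map_sum, sum_bernsteinPolynomial_mul_X_sub_pow,
      unitIntervalIntegral_C_mul, map_sum, add_sub_cancel_right, displacementPoly,
      eval_finsetSum, mul_sum]
    simp only [unitIntervalIntegral_C_mul, eval_C_mul, eval_X_pow, displacementCoeff, sum_mul,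
      mul_sum]
    rw [sum_comm]
    refine sum_congr rfl fun k hk => ?_
    rw [unitIntervalIntegral_mul_binomialCentralMoment N (Nat.lt_succ_iff.mp (mem_range.mp hk)),
      mul_sum, mul_sum, mul_sum]
    refine sum_congr rfl fun j _ => ?_
    ring

theorem abs_sum_integral_sub_le (m : ℕ) {n : ℕ} (hn : 1 ≤ n) :
    |(∑ i ∈ Icc 1 n, (i : ℝ) * (n.choose i : ℝ) * ∫ x in (0 : ℝ)..1,
        (x - (2 * (i : ℝ) - 1) / (2 * n)) ^ (2 * m) * x ^ (i - 1) * (1 - x) ^ (n - i))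
      - m ! / (2 ^ m * (1 + 2 * m)) * (n / n ^ m)|
      ≤ (∑ i ∈ range m, |(taylor (-1) (displacementPoly m)).coeff i|) / n ^ m := by
  have hn1 : (1 : ℝ) ≤ n := by exact_mod_cast hn
  have hn0 : (0 : ℝ) < n := zero_lt_one.trans_le hn1
  have hbound := (taylor (-1) (displacementPoly m)).mul_abs_eval_sub_leadingCoeff_mul_pow_le hn1
  rw [natDegree_taylor, leadingCoeff_taylor, natDegree_displacementPoly,
    leadingCoeff_displacementPoly, taylor_eval, ← sub_eq_add_neg] at hbound
  have hnm : (0 : ℝ) < n ^ m := pow_pos hn0 m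
  have hsplit : (n : ℝ) / n ^ (2 * m) * (displacementPoly m).eval ((n : ℝ) - 1)
        - m ! / (2 ^ m * (1 + 2 * m)) * (n / n ^ m)
      = n * ((displacementPoly m).eval ((n : ℝ) - 1) - m ! / (2 ^ m * (1 + 2 * m)) * n ^ m)
        / n ^ m / n ^ m := by
    field_simp
    ring
  rw [sum_integral_eq_eval_displacementPoly, hsplit, abs_div, abs_div, abs_mul, abs_of_pos hn0,
    abs_of_pos hnm, div_le_div_iff_of_pos_right hnm, div_le_iff₀ hnm]
  exact hbound

theorem stmt1_general (a : ℕ) (hae : Even a) :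
    ∃ C > 0, ∃ N : ℕ, ∀ n : ℕ, N ≤ n →
      |(∑ i ∈ Finset.Icc 1 n, (i : ℝ) * (n.choose i : ℝ) *
            ∫ x in (0:ℝ)..1,
              |x - (2 * (i : ℝ) - 1) / (2 * n)| ^ a * x ^ (i - 1) * (1 - x) ^ (n - i))
          - ((Nat.factorial (a / 2) : ℝ) / (2 ^ (a / 2) * (1 + (a : ℝ)))) *
              (n : ℝ) ^ ((1 : ℝ) - (a : ℝ) / 2)|
        ≤ C * (n : ℝ) ^ (-(a : ℝ) / 2) := by
  obtain ⟨m, rfl⟩ := hae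
  set K := ∑ i ∈ range m, |(taylor (-1) (displacementPoly m)).coeff i|
  refine ⟨K + 1, by positivity, 1, fun n hn => ?_⟩
  have hn0 : (0 : ℝ) < n := by exact_mod_cast hn
  have hmain : (n : ℝ) ^ ((1 : ℝ) - ((m + m : ℕ) : ℝ) / 2) = n / n ^ m := by
    rw [show (1 : ℝ) - ((m + m : ℕ) : ℝ) / 2 = 1 - m by push_cast; ring, Real.rpow_sub hn0,
      Real.rpow_one, Real.rpow_natCast]
  have herror : (n : ℝ) ^ (-((m + m : ℕ) : ℝ) / 2) = 1 / n ^ m := by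
    rw [show -((m + m : ℕ) : ℝ) / 2 = -m by push_cast; ring, Real.rpow_neg hn0.le,
      Real.rpow_natCast, one_div]
  simp only [Even.pow_abs ⟨m, rfl⟩, hmain, herror]
  rw [← two_mul, Nat.mul_div_cancel_left m two_pos]
  push_cast
  refine (abs_sum_integral_sub_le m hn).trans ?_
  rw [← div_eq_mul_one_div]
  gcongr
  linarith

/-- For an even positive integer `a`, the expected total displacement to the
power `a` of the order statistics of `n` uniform points on `[0,1]` to the anchors
`tᵢ = (2i-1)/(2n)` equals `(a/2)!/(2^{a/2}(1+a)) · n^{1-a/2} + O(n^{-a/2})`. -/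
theorem stmt1 (a : ℕ) (ha : 0 < a) (hae : Even a) :
    ∃ C > 0, ∃ N : ℕ, ∀ n : ℕ, N ≤ n →
      |(∑ i ∈ Finset.Icc 1 n, (i : ℝ) * (n.choose i : ℝ) *
            ∫ x in (0:ℝ)..1,
              |x - (2 * (i : ℝ) - 1) / (2 * n)| ^ a * x ^ (i - 1) * (1 - x) ^ (n - i))
          - ((Nat.factorial (a / 2) : ℝ) / (2 ^ (a / 2) * (1 + (a : ℝ)))) *
              (n : ℝ) ^ ((1 : ℝ) - (a : ℝ) / 2)|
        ≤ C * (n : ℝ) ^ (-(a : ℝ) / 2) :=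
  stmt1_general a hae
end

section
/- Let $a$ be an odd positive integer. For each $n \ge 1$ and $1 \le i \le n$, let $t_i = \frac{i}{n} - \frac{1}{2n}$ and define $D_i^{(a)} = i \binom{n}{i} \int_0^1 |x - t_i|^a \, x^{i-1} (1-x)^{n-i} \, dx$. Then $\sum_{i=1}^{n} D_i^{(a)} = \Theta\left(\frac{1}{n^{a/2-1}}\right)$; that is, there exist constants $c_2 \ge c_1 > 0$ and $N$ such that for all $n \ge N$, $c_1 \, n^{1-a/2} \le \sum_{i=1}^{n} D_i^{(a)} \le c_2 \, n^{1-a/2}$. -/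
/-!
With `j = i - 1` and `m = n - i`, the `i`-th summand is `E|X - tᵢ|^a` for `X ~ Beta(j + 1, m + 1)`,
and the anchor sits within `1/(n + 1)` of the mean: `|(j + 1) - (n + 1) tᵢ| ≤ 1`. Integrating by
parts against `x^(j+1) (1-x)^(m+1) (x-t)^r` gives a three-term recurrence for the moments
`E (X - t)^k`, from which `|E (X - t)^k| ≤ C_k n^(-⌈k/2⌉)` and, for `t ∈ [1/4, 3/4]`,
`E (X - t)² ≥ 1/(16 n)`. Writing `Y = X - tᵢ`, Cauchy–Schwarz, `(E|Y|^a)² ≤ E Y^(2a)`, bounds each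
of the `n` summands by `O(n^(-a/2))`. Conversely, Lyapunov's inequality gives `(E Y²)³ ≤ (E|Y|)² E Y⁴` and
`(E|Y|)^a ≤ E|Y|^a`, so `E|Y|^a ≳ n^(-a/2)` for the at least `n/8` indices with `tᵢ ∈ [1/4, 3/4]`.
-/

open MeasureTheory intervalIntegral Set

theorem integral_rpow_mul_rpow_le {α : Type*} [MeasurableSpace α] {μ : Measure α}
    {f g : α → ℝ} (hf₀ : 0 ≤ᵐ[μ] f) (hg₀ : 0 ≤ᵐ[μ] g) (hf : Integrable f μ) (hg : Integrable g μ)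
    {p q : ℝ} (hp : 0 ≤ p) (hq : 0 ≤ q) (hpq : p + q = 1) :
    ∫ a, f a ^ p * g a ^ q ∂μ ≤ (∫ a, f a ∂μ) ^ p * (∫ a, g a ∂μ) ^ q := by
  have hfg₀ : 0 ≤ᵐ[μ] fun a => f a ^ p * g a ^ q := by
    filter_upwards [hf₀, hg₀] with a ha hb
    exact mul_nonneg (Real.rpow_nonneg ha p) (Real.rpow_nonneg hb q)
  have hfg : AEStronglyMeasurable (fun a => f a ^ p * g a ^ q) μ :=
    ((hf.aemeasurable.pow_const p).mul (hg.aemeasurable.pow_const q)).aestronglyMeasurable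
  have hofReal : ∀ᵐ a ∂μ, ENNReal.ofReal (f a ^ p * g a ^ q)
      = ENNReal.ofReal (f a) ^ p * ENNReal.ofReal (g a) ^ q := by
    filter_upwards [hf₀, hg₀] with a ha hb
    rw [ENNReal.ofReal_mul (Real.rpow_nonneg ha p), ENNReal.ofReal_rpow_of_nonneg ha hp,
      ENNReal.ofReal_rpow_of_nonneg hb hq]
  have hle := ENNReal.lintegral_mul_norm_pow_le (μ := μ) hf.aemeasurable.ennreal_ofReal
    hg.aemeasurable.ennreal_ofReal hp hq hpq
  rw [← lintegral_congr_ae hofReal, ← ofReal_integral_eq_lintegral_ofReal hf hf₀,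
    ← ofReal_integral_eq_lintegral_ofReal hg hg₀] at hle
  rw [integral_eq_lintegral_of_nonneg_ae hfg₀ hfg]
  refine (ENNReal.toReal_mono (by finiteness) hle).trans_eq ?_
  rw [ENNReal.toReal_mul, ← ENNReal.toReal_rpow, ← ENNReal.toReal_rpow,
    ENNReal.toReal_ofReal (integral_nonneg_of_ae hf₀),
    ENNReal.toReal_ofReal (integral_nonneg_of_ae hg₀)]

theorem rpow_mul_rpow_eq_rpow_mul {u w p q : ℝ} (k l : ℕ) (hu : 0 ≤ u) (hw : 0 ≤ w)
    (hp : 0 ≤ p) (hq : 0 ≤ q) (hpq : p + q = 1) :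
    (u ^ k * w) ^ p * (u ^ l * w) ^ q = u ^ (k * p + l * q) * w := by
  rw [Real.mul_rpow (by positivity) hw, Real.mul_rpow (by positivity) hw, ← Real.rpow_natCast u k,
    ← Real.rpow_natCast u l, ← Real.rpow_mul hu, ← Real.rpow_mul hu,
    Real.rpow_add_of_nonneg hu (by positivity) (by positivity)]
  conv_rhs => rw [← Real.rpow_one w, ← hpq, Real.rpow_add_of_nonneg hw hp hq]
  ring

-- Density of the `(j + 1)`-th order statistic of `j + m + 1` uniform points on `[0, 1]`.
noncomputable def betaDensity (j m : ℕ) (x : ℝ) : ℝ :=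
  (j + 1) * (j + m + 1).choose (j + 1) * x ^ j * (1 - x) ^ m

@[fun_prop]
theorem continuous_betaDensity (j m : ℕ) : Continuous (betaDensity j m) := by
  unfold betaDensity; fun_prop

theorem betaDensity_nonneg (j m : ℕ) {x : ℝ} (hx : x ∈ Icc (0 : ℝ) 1) : 0 ≤ betaDensity j m x := by
  have : 0 ≤ 1 - x := by linarith [hx.2]
  have := hx.1
  unfold betaDensity; positivity

noncomputable def betaMoment (j m k : ℕ) (t : ℝ) : ℝ :=
  ∫ x in (0 : ℝ)..1, (x - t) ^ k * betaDensity j m x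

noncomputable def betaAbsMoment (j m k : ℕ) (t : ℝ) : ℝ :=
  ∫ x in (0 : ℝ)..1, |x - t| ^ k * betaDensity j m x

section Moments

variable (j m : ℕ) (t : ℝ)

theorem intervalIntegrable_pow_mul_betaDensity (k : ℕ) :
    IntervalIntegrable (fun x => (x - t) ^ k * betaDensity j m x) volume 0 1 :=
  (by fun_prop : Continuous _).intervalIntegrable 0 1

-- `x^(j+1) (1-x)^(m+1) (x-t)^r` vanishes at both ends of `[0, 1]`; its derivative is expanded
-- in powers of `x - t`.
theorem betaMoment_recurrence (r : ℕ) :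
    ((j : ℝ) + m + 2 + r) * betaMoment j m (r + 1) t
      = r * (t * (1 - t)) * betaMoment j m (r - 1) t
        + ((j + 1) - (j + m + 2) * t + r * (1 - 2 * t)) * betaMoment j m r t := by
  set c : ℝ := (j + 1) * (j + m + 1).choose (j + 1)
  have hF : ∀ x, HasDerivAt (fun x => c * (x ^ (j + 1) * (1 - x) ^ (m + 1) * (x - t) ^ r))
      (r * (t * (1 - t)) * ((x - t) ^ (r - 1) * betaDensity j m x)
        + ((j + 1) - (j + m + 2) * t + r * (1 - 2 * t)) * ((x - t) ^ r * betaDensity j m x)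
        - ((j : ℝ) + m + 2 + r) * ((x - t) ^ (r + 1) * betaDensity j m x)) x := by
    intro x
    have h1 := (hasDerivAt_id' x).pow (j + 1)
    have h2 := ((hasDerivAt_id' x).const_sub 1).pow (m + 1)
    have h3 := ((hasDerivAt_id' x).sub_const t).pow r
    refine (((h1.fun_mul h2).fun_mul h3).const_mul c).congr_deriv ?_
    simp only [betaDensity, c, Pi.pow_apply]
    rcases r with _ | r
    · simp only [Nat.cast_zero, zero_mul, mul_zero, zero_add]; push_cast; ring
    · push_cast; ring
  have hzero := integral_eq_sub_of_hasDerivAt (fun x _ => hF x)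
    (((by fun_prop : Continuous _).intervalIntegrable 0 1))
  simp only [one_pow, sub_self, zero_pow (Nat.succ_ne_zero _), mul_zero, zero_mul, sub_zero]
    at hzero
  rw [integral_sub ((intervalIntegrable_pow_mul_betaDensity j m t _).const_mul _ |>.add
      ((intervalIntegrable_pow_mul_betaDensity j m t _).const_mul _))
      ((intervalIntegrable_pow_mul_betaDensity j m t _).const_mul _),
    integral_add ((intervalIntegrable_pow_mul_betaDensity j m t _).const_mul _)
      ((intervalIntegrable_pow_mul_betaDensity j m t _).const_mul _),
    intervalIntegral.integral_const_mul, intervalIntegral.integral_const_mul,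
    intervalIntegral.integral_const_mul] at hzero
  simp only [betaMoment]
  linarith

theorem betaMoment_zero_eq_integral : betaMoment j m 0 t = ∫ x in (0 : ℝ)..1, betaDensity j m x := by
  simp [betaMoment]

-- The recurrence at `t = 1`, `r = 0` says that the densities for `m` and `m + 1` have equal mass.
theorem integral_betaDensity : ∫ x in (0 : ℝ)..1, betaDensity j m x = 1 := by
  induction m with
  | zero =>
    simp only [betaDensity, pow_zero, mul_one, Nat.add_zero, Nat.choose_self, Nat.cast_one]
    rw [intervalIntegral.integral_const_mul, integral_pow]
    field_simp
    simp
  | succ m ih =>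
    have hchoose : ((j + m + 1).choose (j + 1) : ℝ) * (j + m + 2)
        = (j + m + 2).choose (j + 1) * (m + 1) := by
      have := Nat.choose_mul_succ_eq (j + m + 1) (j + 1)
      rw [show j + m + 1 + 1 - (j + 1) = m + 1 by omega] at this
      exact_mod_cast this
    have hshift : ((j : ℝ) + m + 2) * betaMoment j m 1 1
        = -(m + 1) * ∫ x in (0 : ℝ)..1, betaDensity j (m + 1) x := by
      rw [betaMoment, ← intervalIntegral.integral_const_mul, ← intervalIntegral.integral_const_mul]
      refine integral_congr fun x _ => ?_
      simp only [betaDensity]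
      linear_combination (-(x ^ j) * (1 - x) ^ (m + 1) * (j + 1)) * hchoose
    have hrec := betaMoment_recurrence j m 1 0
    rw [betaMoment_zero_eq_integral, ih] at hrec
    simp only [Nat.cast_zero, add_zero, zero_add] at hrec
    rw [hshift] at hrec
    have hm : (m : ℝ) + 1 ≠ 0 := by positivity
    apply mul_left_cancel₀ hm
    linarith

theorem betaMoment_zero_eq_one : betaMoment j m 0 t = 1 := by
  rw [betaMoment_zero_eq_integral, integral_betaDensity]

theorem betaAbsMoment_two_mul (k : ℕ) : betaAbsMoment j m (2 * k) t = betaMoment j m (2 * k) t := by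
  simp only [betaAbsMoment, betaMoment, pow_mul, sq_abs]

theorem betaAbsMoment_zero_eq_one : betaAbsMoment j m 0 t = 1 := by
  rw [← mul_zero 2, betaAbsMoment_two_mul, mul_zero, betaMoment_zero_eq_one]

theorem betaAbsMoment_nonneg (k : ℕ) : 0 ≤ betaAbsMoment j m k t :=
  integral_nonneg zero_le_one fun x hx => mul_nonneg (by positivity) (betaDensity_nonneg j m hx)

-- `hδ` says that `t` lies within `1/(j + m + 2)` of the mean `(j + 1)/(j + m + 2)`.
theorem abs_betaMoment_two_add_le (ht₀ : 0 ≤ t) (ht₁ : t ≤ 1)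
    (hδ : |(j + 1) - (j + m + 2) * t| ≤ 1) (l : ℕ) :
    ((j : ℝ) + m + 1) * |betaMoment j m (l + 2) t|
      ≤ (l + 1) * |betaMoment j m l t| + (l + 2) * |betaMoment j m (l + 1) t| := by
  have hrec := betaMoment_recurrence j m t (l + 1)
  simp only [Nat.add_sub_cancel, Nat.cast_add, Nat.cast_one] at hrec
  have hcoef : 0 ≤ ((l : ℝ) + 1) * (t * (1 - t)) := by
    have : 0 ≤ 1 - t := by linarith
    positivity
  have hlin : |(j + 1) - (j + m + 2) * t + (l + 1) * (1 - 2 * t)| ≤ l + 2 := by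
    have : |(l + 1) * (1 - 2 * t)| ≤ l + 1 := by
      rw [abs_mul, abs_of_nonneg (by positivity : (0 : ℝ) ≤ l + 1)]
      exact mul_le_of_le_one_right (by positivity) (by rw [abs_le]; constructor <;> linarith)
    linarith [abs_add_le ((j + 1) - (j + m + 2) * t : ℝ) ((l + 1) * (1 - 2 * t))]
  calc ((j : ℝ) + m + 1) * |betaMoment j m (l + 2) t|
      ≤ |((j : ℝ) + m + 2 + (l + 1)) * betaMoment j m (l + 1 + 1) t| := by
        rw [abs_mul, abs_of_nonneg (by positivity : (0 : ℝ) ≤ j + m + 2 + (l + 1))]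
        exact mul_le_mul_of_nonneg_right (by linarith) (abs_nonneg _)
    _ ≤ (l + 1) * (t * (1 - t)) * |betaMoment j m l t|
        + |(j + 1) - (j + m + 2) * t + (l + 1) * (1 - 2 * t)| * |betaMoment j m (l + 1) t| := by
        rw [hrec]
        refine (abs_add_le _ _).trans (le_of_eq ?_)
        rw [abs_mul (((l : ℝ) + 1) * (t * (1 - t))), abs_mul _ (betaMoment j m (l + 1) t),
          abs_of_nonneg hcoef]
    _ ≤ (l + 1) * |betaMoment j m l t| + (l + 2) * |betaMoment j m (l + 1) t| := by
        gcongr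
        exact mul_le_of_le_one_right (by positivity) (by nlinarith)

noncomputable def momentBound : ℕ → ℝ
  | 0 => 1
  | 1 => 1
  | l + 2 => (l + 1) * momentBound l + (l + 2) * momentBound (l + 1)

theorem momentBound_pos : ∀ k, 0 < momentBound k
  | 0 => by simp [momentBound]
  | 1 => by simp [momentBound]
  | l + 2 => by
    have := momentBound_pos l
    have := momentBound_pos (l + 1)
    rw [momentBound]
    positivity

theorem abs_betaMoment_mul_pow_le (ht₀ : 0 ≤ t) (ht₁ : t ≤ 1)
    (hδ : |(j + 1) - (j + m + 2) * t| ≤ 1) :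
    ∀ k, |betaMoment j m k t| * ((j : ℝ) + m + 1) ^ ((k + 1) / 2) ≤ momentBound k
  | 0 => by simp [betaMoment_zero_eq_one, momentBound]
  | 1 => by
    have hrec := betaMoment_recurrence j m t 0
    simp only [Nat.cast_zero, add_zero, zero_mul, zero_add, betaMoment_zero_eq_one, mul_one]
      at hrec
    have : ((j : ℝ) + m + 1) * |betaMoment j m 1 t| ≤ ((j : ℝ) + m + 2) * |betaMoment j m 1 t| :=
      mul_le_mul_of_nonneg_right (by linarith) (abs_nonneg _)
    rw [← abs_of_nonneg (by positivity : (0 : ℝ) ≤ j + m + 2), ← abs_mul, hrec] at this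
    simp only [momentBound]
    linarith
  | l + 2 => by
    have hn : (1 : ℝ) ≤ j + m + 1 := by
      linarith [(j.cast_nonneg : (0 : ℝ) ≤ j), (m.cast_nonneg : (0 : ℝ) ≤ m)]
    have ih₀ := abs_betaMoment_mul_pow_le ht₀ ht₁ hδ l
    have ih₁ : |betaMoment j m (l + 1) t| * ((j : ℝ) + m + 1) ^ ((l + 1) / 2)
        ≤ momentBound (l + 1) :=
      (mul_le_mul_of_nonneg_left (pow_le_pow_right₀ hn (by omega)) (abs_nonneg _)).trans
        (abs_betaMoment_mul_pow_le ht₀ ht₁ hδ (l + 1))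
    rw [show (l + 2 + 1) / 2 = (l + 1) / 2 + 1 by omega, pow_succ, momentBound]
    calc |betaMoment j m (l + 2) t| * (((j : ℝ) + m + 1) ^ ((l + 1) / 2) * (j + m + 1))
        = (((j : ℝ) + m + 1) * |betaMoment j m (l + 2) t|) * ((j : ℝ) + m + 1) ^ ((l + 1) / 2) := by
          ring
      _ ≤ ((l + 1) * |betaMoment j m l t| + (l + 2) * |betaMoment j m (l + 1) t|)
            * ((j : ℝ) + m + 1) ^ ((l + 1) / 2) := by
          gcongr
          exact abs_betaMoment_two_add_le j m t ht₀ ht₁ hδ l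
      _ = (l + 1) * (|betaMoment j m l t| * ((j : ℝ) + m + 1) ^ ((l + 1) / 2))
            + (l + 2) * (|betaMoment j m (l + 1) t| * ((j : ℝ) + m + 1) ^ ((l + 1) / 2)) := by ring
      _ ≤ (l + 1) * momentBound l + (l + 2) * momentBound (l + 1) := by gcongr

theorem betaMoment_le_momentBound (ht₀ : 0 ≤ t) (ht₁ : t ≤ 1)
    (hδ : |(j + 1) - (j + m + 2) * t| ≤ 1) (k : ℕ) :
    betaMoment j m (2 * k) t * ((j : ℝ) + m + 1) ^ k ≤ momentBound (2 * k) := by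
  have h := abs_betaMoment_mul_pow_le j m t ht₀ ht₁ hδ (2 * k)
  rw [show (2 * k + 1) / 2 = k by omega] at h
  exact (mul_le_mul_of_nonneg_right (le_abs_self _) (by positivity)).trans h

theorem inv_le_betaMoment_two (ht₀ : 1 / 4 ≤ t) (ht₁ : t ≤ 3 / 4)
    (hδ : |(j + 1) - (j + m + 2) * t| ≤ 1) (hn : 9 ≤ j + m + 1) :
    (16 * ((j : ℝ) + m + 1))⁻¹ ≤ betaMoment j m 2 t := by
  have hrec₀ := betaMoment_recurrence j m t 0
  have hrec₁ := betaMoment_recurrence j m t 1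
  simp only [Nat.cast_zero, Nat.cast_one, add_zero, zero_mul, zero_add, mul_one, one_mul,
    Nat.sub_self, betaMoment_zero_eq_one] at hrec₀ hrec₁
  set n : ℝ := (j : ℝ) + m + 1 with hn_def
  set δ : ℝ := (j + 1) - (j + m + 2) * t
  have hn9 : (9 : ℝ) ≤ n := by rw [hn_def]; exact_mod_cast hn
  have hδδ : -1 ≤ δ * (δ + (1 - 2 * t)) := by
    have h1 : |δ * (1 - 2 * t)| ≤ 1 := by
      rw [abs_mul]
      exact mul_le_one₀ hδ (abs_nonneg _) (by rw [abs_le]; constructor <;> linarith)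
    nlinarith [abs_le.mp h1, sq_nonneg δ]
  have hvar : (n + 1) * (n + 2) * betaMoment j m 2 t
      = (n + 1) * (t * (1 - t)) + δ * (δ + (1 - 2 * t)) := by
    linear_combination (n + 1) * hrec₁ + (δ + (1 - 2 * t)) * hrec₀
  have htt : 3 / 16 ≤ t * (1 - t) := by nlinarith
  have hP : 0 < (n + 1) * (n + 2) := by positivity
  rw [inv_le_iff_one_le_mul₀ (by positivity)]
  refine le_of_mul_le_mul_left ?_ hP
  have hlow : 16 * n * ((n + 1) * (3 / 16) - 1)
      ≤ 16 * n * ((n + 1) * (t * (1 - t)) + δ * (δ + (1 - 2 * t))) := by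
    gcongr
    nlinarith
  calc (n + 1) * (n + 2) * 1 ≤ 16 * n * ((n + 1) * (3 / 16) - 1) := by nlinarith
    _ ≤ _ := hlow
    _ = _ := by rw [← hvar]; ring

theorem betaAbsMoment_le_rpow_mul_rpow {k l r : ℕ} {p q : ℝ} (hp : 0 ≤ p) (hq : 0 ≤ q)
    (hpq : p + q = 1) (hr : (k : ℝ) * p + l * q = r) :
    betaAbsMoment j m r t ≤ betaAbsMoment j m k t ^ p * betaAbsMoment j m l t ^ q := by
  have hmem : ∀ᵐ x ∂(volume.restrict (Ioc (0 : ℝ) 1)), x ∈ Icc (0 : ℝ) 1 :=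
    (ae_restrict_mem measurableSet_Ioc).mono fun x hx => Ioc_subset_Icc_self hx
  have hint : ∀ n : ℕ, Integrable (fun x => |x - t| ^ n * betaDensity j m x)
      (volume.restrict (Ioc (0 : ℝ) 1)) := fun n =>
    ((by fun_prop : Continuous fun x => |x - t| ^ n * betaDensity j m x).intervalIntegrable 0 1).1
  have hnonneg : ∀ n : ℕ, 0 ≤ᵐ[volume.restrict (Ioc (0 : ℝ) 1)]
      fun x => |x - t| ^ n * betaDensity j m x := fun n =>
    hmem.mono fun x hx => mul_nonneg (by positivity) (betaDensity_nonneg j m hx)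
  simp only [betaAbsMoment, integral_of_le zero_le_one]
  refine le_of_eq_of_le (integral_congr_ae ?_)
    (integral_rpow_mul_rpow_le (hnonneg k) (hnonneg l) (hint k) (hint l) hp hq hpq)
  filter_upwards [hmem] with x hx
  rw [rpow_mul_rpow_eq_rpow_mul k l (abs_nonneg _) (betaDensity_nonneg j m hx) hp hq hpq, hr,
    Real.rpow_natCast]

theorem betaAbsMoment_pow_le {k r l : ℕ} (hkr : k ≤ r) (hrl : r ≤ l) :
    betaAbsMoment j m r t ^ (l - k)
      ≤ betaAbsMoment j m k t ^ (l - r) * betaAbsMoment j m l t ^ (r - k) := by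
  rcases eq_or_lt_of_le (hkr.trans hrl) with hkl | hkl
  · subst hkl
    obtain rfl : r = k := le_antisymm hrl hkr
    simp
  have hd : (0 : ℝ) < l - k := by rw [sub_pos]; exact_mod_cast hkl
  set p : ℝ := (l - r) / (l - k) with hp
  set q : ℝ := (r - k) / (l - k) with hq
  have hp₀ : 0 ≤ p := div_nonneg (by rw [sub_nonneg]; exact_mod_cast hrl) hd.le
  have hq₀ : 0 ≤ q := div_nonneg (by rw [sub_nonneg]; exact_mod_cast hkr) hd.le
  have hHolder := betaAbsMoment_le_rpow_mul_rpow j m t (k := k) (l := l) (r := r) hp₀ hq₀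
    (by rw [hp, hq]; field_simp; ring) (by rw [hp, hq]; field_simp; ring)
  have hk := betaAbsMoment_nonneg j m t k
  have hl := betaAbsMoment_nonneg j m t l
  calc betaAbsMoment j m r t ^ (l - k)
      ≤ (betaAbsMoment j m k t ^ p * betaAbsMoment j m l t ^ q) ^ (l - k) :=
        pow_le_pow_left₀ (betaAbsMoment_nonneg j m t r) hHolder _
    _ = betaAbsMoment j m k t ^ (l - r) * betaAbsMoment j m l t ^ (r - k) := by
        rw [mul_pow, ← Real.rpow_mul_natCast hk, ← Real.rpow_mul_natCast hl,
          ← Real.rpow_natCast _ (l - r), ← Real.rpow_natCast _ (r - k),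
          Nat.cast_sub hkl.le, Nat.cast_sub hrl, Nat.cast_sub hkr, hp, hq]
        field_simp

theorem sq_betaAbsMoment_mul_pow_le (ht₀ : 0 ≤ t) (ht₁ : t ≤ 1)
    (hδ : |(j + 1) - (j + m + 2) * t| ≤ 1) {a : ℕ} (ha : a ≠ 0) :
    betaAbsMoment j m a t ^ 2 * ((j : ℝ) + m + 1) ^ a ≤ momentBound (2 * a) := by
  have hly := betaAbsMoment_pow_le j m t (Nat.zero_le a) (by omega : a ≤ 2 * a)
  rw [betaAbsMoment_zero_eq_one, one_pow, one_mul, show 2 * a - 0 = 2 * a by omega,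
    show a - 0 = a by omega, show 2 * a = a * 2 by omega, pow_mul', mul_comm a 2,
    pow_le_pow_iff_left₀ (by positivity) (betaAbsMoment_nonneg j m t _) ha,
    betaAbsMoment_two_mul] at hly
  exact (mul_le_mul_of_nonneg_right hly (by positivity)).trans
    (betaMoment_le_momentBound j m t ht₀ ht₁ hδ a)

theorem pow_le_sq_betaAbsMoment_mul_pow (ht₀ : 1 / 4 ≤ t) (ht₁ : t ≤ 3 / 4)
    (hδ : |(j + 1) - (j + m + 2) * t| ≤ 1) (hn : 9 ≤ j + m + 1) {a : ℕ} (ha : 1 ≤ a) :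
    (16 ^ 3 * momentBound 4)⁻¹ ^ a ≤ betaAbsMoment j m a t ^ 2 * ((j : ℝ) + m + 1) ^ a := by
  have hA₂ : (16 * ((j : ℝ) + m + 1))⁻¹ ≤ betaAbsMoment j m 2 t := by
    rw [show 2 = 2 * 1 from rfl, betaAbsMoment_two_mul]
    exact inv_le_betaMoment_two j m t ht₀ ht₁ hδ hn
  have hA₄ : betaAbsMoment j m 4 t * ((j : ℝ) + m + 1) ^ 2 ≤ momentBound 4 := by
    rw [show 4 = 2 * 2 from rfl, betaAbsMoment_two_mul]
    exact betaMoment_le_momentBound j m t (by linarith) (by linarith) hδ 2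
  have hly₁ : betaAbsMoment j m 2 t ^ 3 ≤ betaAbsMoment j m 1 t ^ 2 * betaAbsMoment j m 4 t := by
    simpa using betaAbsMoment_pow_le j m t (k := 1) (r := 2) (l := 4) (by norm_num) (by norm_num)
  have hly₂ : betaAbsMoment j m 1 t ^ a ≤ betaAbsMoment j m a t := by
    simpa [betaAbsMoment_zero_eq_one] using
      betaAbsMoment_pow_le j m t (k := 0) (r := 1) (l := a) (by norm_num) ha
  set n : ℝ := (j : ℝ) + m + 1
  have hn₀ : 0 < n := by positivity
  have hA₁ : (16 ^ 3 * momentBound 4)⁻¹ ≤ betaAbsMoment j m 1 t ^ 2 * n := by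
    have := momentBound_pos 4
    rw [inv_le_iff_one_le_mul₀ (by positivity)]
    calc (1 : ℝ) = (16 * n) ^ 3 * (16 * n)⁻¹ ^ 3 := by field_simp
      _ ≤ (16 * n) ^ 3 * betaAbsMoment j m 2 t ^ 3 := by gcongr
      _ ≤ (16 * n) ^ 3 * (betaAbsMoment j m 1 t ^ 2 * betaAbsMoment j m 4 t) := by gcongr
      _ = 16 ^ 3 * (betaAbsMoment j m 1 t ^ 2 * n) * (betaAbsMoment j m 4 t * n ^ 2) := by ring
      _ ≤ 16 ^ 3 * (betaAbsMoment j m 1 t ^ 2 * n) * momentBound 4 := by gcongr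
      _ = betaAbsMoment j m 1 t ^ 2 * n * (16 ^ 3 * momentBound 4) := by ring
  calc (16 ^ 3 * momentBound 4)⁻¹ ^ a ≤ (betaAbsMoment j m 1 t ^ 2 * n) ^ a :=
        pow_le_pow_left₀ (inv_nonneg.mpr (by have := momentBound_pos 4; positivity)) hA₁ a
    _ = (betaAbsMoment j m 1 t ^ a) ^ 2 * n ^ a := by
        rw [mul_pow, ← pow_mul, ← pow_mul, mul_comm 2 a]
    _ ≤ betaAbsMoment j m a t ^ 2 * n ^ a := by
        gcongr
        exact pow_nonneg (betaAbsMoment_nonneg j m t 1) a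

end Moments

theorem sqrt_mul_rpow_neg_half {x : ℝ} (hx : 0 ≤ x) (K : ℝ) (a : ℕ) :
    √K * x ^ (-(a : ℝ) / 2) = √(K / x ^ a) := by
  rw [Real.sqrt_div' K (pow_nonneg hx a), Real.sqrt_eq_rpow (x ^ a), ← Real.rpow_natCast,
    ← Real.rpow_mul hx, neg_div, Real.rpow_neg hx, ← div_eq_mul_inv, one_div, ← div_eq_mul_inv]

noncomputable def anchorDisplacement (a n i : ℕ) : ℝ :=
  (i : ℝ) * (n.choose i : ℝ) *
    ∫ x in (0 : ℝ)..1, |x - (2 * (i : ℝ) - 1) / (2 * n)| ^ a * x ^ (i - 1) * (1 - x) ^ (n - i)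

theorem anchorDisplacement_nonneg (a n i : ℕ) : 0 ≤ anchorDisplacement a n i := by
  refine mul_nonneg (by positivity) (integral_nonneg zero_le_one fun x hx => ?_)
  have : 0 ≤ 1 - x := by linarith [hx.2]
  have := hx.1
  positivity

theorem anchorDisplacement_eq (a j m : ℕ) :
    anchorDisplacement a (j + m + 1) (j + 1)
      = betaAbsMoment j m a ((2 * j + 1) / (2 * (j + m + 1))) := by
  rw [anchorDisplacement, betaAbsMoment, ← intervalIntegral.integral_const_mul]
  refine integral_congr fun x _ => ?_
  simp only [betaDensity, Nat.add_sub_cancel, show j + m + 1 - (j + 1) = m by omega]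
  push_cast
  ring_nf

theorem abs_sub_mul_anchor_le_one (j m : ℕ) :
    |(j + 1) - (j + m + 2) * ((2 * j + 1) / (2 * (j + m + 1)) : ℝ)| ≤ 1 := by
  have hd : (0 : ℝ) < 2 * (j + m + 1) := by positivity
  rw [show (j + 1) - (j + m + 2) * ((2 * j + 1) / (2 * (j + m + 1)) : ℝ)
      = (m - j) / (2 * (j + m + 1)) by field_simp; ring,
    abs_div, abs_of_pos hd, div_le_one hd, abs_le]
  constructor <;> linarith [(j.cast_nonneg : (0 : ℝ) ≤ j), (m.cast_nonneg : (0 : ℝ) ≤ m)]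

theorem anchorDisplacement_le {a n i : ℕ} (ha : a ≠ 0) (hi : i ∈ Finset.Icc 1 n) :
    anchorDisplacement a n i ≤ √(momentBound (2 * a)) * (n : ℝ) ^ (-(a : ℝ) / 2) := by
  rw [Finset.mem_Icc] at hi
  obtain ⟨j, rfl⟩ : ∃ j, i = j + 1 := ⟨i - 1, by omega⟩
  obtain ⟨m, rfl⟩ : ∃ m, n = j + m + 1 := ⟨n - (j + 1), by omega⟩
  set t : ℝ := (2 * j + 1) / (2 * (j + m + 1))
  have ht₀ : 0 ≤ t := by positivity
  have ht₁ : t ≤ 1 := by rw [div_le_one (by positivity)]; linarith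
  rw [anchorDisplacement_eq, sqrt_mul_rpow_neg_half (by positivity),
    Real.le_sqrt (betaAbsMoment_nonneg j m t a) (by have := momentBound_pos (2 * a); positivity),
    le_div_iff₀ (by positivity)]
  exact_mod_cast sq_betaAbsMoment_mul_pow_le j m t ht₀ ht₁ (abs_sub_mul_anchor_le_one j m) ha

theorem le_anchorDisplacement {a n i : ℕ} (ha : 1 ≤ a) (hn : 16 ≤ n)
    (hi : i ∈ Finset.Icc (n / 4 + 2) (n / 2)) :
    √((16 ^ 3 * momentBound 4)⁻¹ ^ a) * (n : ℝ) ^ (-(a : ℝ) / 2) ≤ anchorDisplacement a n i := by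
  rw [Finset.mem_Icc] at hi
  obtain ⟨j, rfl⟩ : ∃ j, i = j + 1 := ⟨i - 1, by omega⟩
  obtain ⟨m, rfl⟩ : ∃ m, n = j + m + 1 := ⟨n - (j + 1), by omega⟩
  have hlo : ((j : ℝ) + m + 1) ≤ 2 * (2 * j + 1) := by
    exact_mod_cast (by omega : j + m + 1 ≤ 2 * (2 * j + 1))
  have hhi : 2 * (2 * (j : ℝ) + 1) ≤ 3 * (j + m + 1) := by
    exact_mod_cast (by omega : 2 * (2 * j + 1) ≤ 3 * (j + m + 1))
  set t : ℝ := (2 * j + 1) / (2 * (j + m + 1))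
  have ht₀ : 1 / 4 ≤ t := by rw [le_div_iff₀ (by positivity)]; linarith
  have ht₁ : t ≤ 3 / 4 := by rw [div_le_iff₀ (by positivity)]; linarith
  rw [anchorDisplacement_eq, sqrt_mul_rpow_neg_half (by positivity), Real.sqrt_le_left
    (betaAbsMoment_nonneg j m t a), div_le_iff₀ (by positivity)]
  exact_mod_cast pow_le_sq_betaAbsMoment_mul_pow j m t ht₀ ht₁ (abs_sub_mul_anchor_le_one j m) (by omega) ha

theorem le_sum_anchorDisplacement {a n : ℕ} (ha : 1 ≤ a) (hn : 16 ≤ n) :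
    √((16 ^ 3 * momentBound 4)⁻¹ ^ a) / 8 * (n * (n : ℝ) ^ (-(a : ℝ) / 2))
      ≤ ∑ i ∈ Finset.Icc 1 n, anchorDisplacement a n i := by
  set M := Finset.Icc (n / 4 + 2) (n / 2)
  have hcard : (n : ℝ) / 8 ≤ M.card := by
    rw [Nat.card_Icc, div_le_iff₀ (by norm_num)]
    exact_mod_cast (by omega : n ≤ (n / 2 + 1 - (n / 4 + 2)) * 8)
  calc √((16 ^ 3 * momentBound 4)⁻¹ ^ a) / 8 * (n * (n : ℝ) ^ (-(a : ℝ) / 2))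
      = (n : ℝ) / 8 * (√((16 ^ 3 * momentBound 4)⁻¹ ^ a) * (n : ℝ) ^ (-(a : ℝ) / 2)) := by ring
    _ ≤ M.card * (√((16 ^ 3 * momentBound 4)⁻¹ ^ a) * (n : ℝ) ^ (-(a : ℝ) / 2)) := by
        gcongr
    _ ≤ ∑ i ∈ M, anchorDisplacement a n i := by
        rw [← nsmul_eq_mul]
        exact Finset.card_nsmul_le_sum _ _ _ fun i hi => le_anchorDisplacement ha hn hi
    _ ≤ ∑ i ∈ Finset.Icc 1 n, anchorDisplacement a n i :=
        Finset.sum_le_sum_of_subset_of_nonneg (Finset.Icc_subset_Icc (by omega) (by omega))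
          fun i _ _ => anchorDisplacement_nonneg a n i

theorem sum_anchorDisplacement_le {a : ℕ} (ha : a ≠ 0) (n : ℕ) :
    ∑ i ∈ Finset.Icc 1 n, anchorDisplacement a n i
      ≤ √(momentBound (2 * a)) * (n * (n : ℝ) ^ (-(a : ℝ) / 2)) := by
  calc ∑ i ∈ Finset.Icc 1 n, anchorDisplacement a n i
      ≤ (Finset.Icc 1 n).card • (√(momentBound (2 * a)) * (n : ℝ) ^ (-(a : ℝ) / 2)) :=
        Finset.sum_le_card_nsmul _ _ _ fun i hi => anchorDisplacement_le ha hi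
    _ = √(momentBound (2 * a)) * (n * (n : ℝ) ^ (-(a : ℝ) / 2)) := by
        rw [Nat.card_Icc, nsmul_eq_mul, Nat.add_sub_cancel]
        ring

theorem stmt2_general (a : ℕ) (ha : 0 < a) :
    ∃ c₁ c₂ : ℝ, 0 < c₁ ∧ c₁ ≤ c₂ ∧ ∃ N : ℕ, ∀ n : ℕ, N ≤ n →
      c₁ * (n : ℝ) ^ ((1 : ℝ) - (a : ℝ) / 2)
        ≤ (∑ i ∈ Finset.Icc 1 n, (i : ℝ) * (n.choose i : ℝ) *
            ∫ x in (0:ℝ)..1,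
              |x - (2 * (i : ℝ) - 1) / (2 * n)| ^ a * x ^ (i - 1) * (1 - x) ^ (n - i)) ∧
      (∑ i ∈ Finset.Icc 1 n, (i : ℝ) * (n.choose i : ℝ) *
            ∫ x in (0:ℝ)..1,
              |x - (2 * (i : ℝ) - 1) / (2 * n)| ^ a * x ^ (i - 1) * (1 - x) ^ (n - i))
        ≤ c₂ * (n : ℝ) ^ ((1 : ℝ) - (a : ℝ) / 2) := by
  have hL : 0 < √((16 ^ 3 * momentBound 4)⁻¹ ^ a) :=
    Real.sqrt_pos.mpr (by have := momentBound_pos 4; positivity)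
  refine ⟨_, _, div_pos hL (by norm_num : (0 : ℝ) < 8), le_max_left _ √(momentBound (2 * a)), 16,
    fun n hn => ?_⟩
  have hscale : (n : ℝ) ^ ((1 : ℝ) - a / 2) = n * (n : ℝ) ^ (-(a : ℝ) / 2) := by
    rw [sub_eq_add_neg, Real.rpow_add (by exact_mod_cast (by omega : 0 < n)), Real.rpow_one,
      ← neg_div]
  change _ ≤ ∑ i ∈ Finset.Icc 1 n, anchorDisplacement a n i
    ∧ ∑ i ∈ Finset.Icc 1 n, anchorDisplacement a n i ≤ _
  rw [hscale]
  exact ⟨le_sum_anchorDisplacement ha hn, (sum_anchorDisplacement_le ha.ne' n).trans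
    (mul_le_mul_of_nonneg_right (le_max_right _ _) (by positivity))⟩

/-- For an odd positive integer `a`, the expected total displacement to the
power `a` of the order statistics of `n` uniform points on `[0,1]` to the anchors
`tᵢ = (2i-1)/(2n)` is `Θ(n^{1-a/2})`. -/
theorem stmt2 (a : ℕ) (ha : 0 < a) (hao : Odd a) :
    ∃ c₁ c₂ : ℝ, 0 < c₁ ∧ c₁ ≤ c₂ ∧ ∃ N : ℕ, ∀ n : ℕ, N ≤ n →
      c₁ * (n : ℝ) ^ ((1 : ℝ) - (a : ℝ) / 2)
        ≤ (∑ i ∈ Finset.Icc 1 n, (i : ℝ) * (n.choose i : ℝ) *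
            ∫ x in (0:ℝ)..1,
              |x - (2 * (i : ℝ) - 1) / (2 * n)| ^ a * x ^ (i - 1) * (1 - x) ^ (n - i)) ∧
      (∑ i ∈ Finset.Icc 1 n, (i : ℝ) * (n.choose i : ℝ) *
            ∫ x in (0:ℝ)..1,
              |x - (2 * (i : ℝ) - 1) / (2 * n)| ^ a * x ^ (i - 1) * (1 - x) ^ (n - i))
        ≤ c₂ * (n : ℝ) ^ ((1 : ℝ) - (a : ℝ) / 2) :=
  stmt2_general a ha
end

section
/- Let $a$ be a positive integer, let $n \ge 1$, let $\varepsilon > 0$, and set $r = \frac{1}{2n} + \frac{\varepsilon}{2}$ and $t_i = \frac{2i-1}{2n}$ for $i = 1, \dots, n$. Then for every sequence $0 \le b_1 \le b_2 \le \dots \le b_n \le 1$ satisfying $b_1 \le r$, $1 - b_n \le r$, and $b_{i+1} - b_i \le 2r$ for $i = 1, \dots, n-1$, one has $\max_{1 \le i \le n} |b_i - t_i| \le n \varepsilon$, and consequently $\sum_{i=1}^{n} |b_i - t_i|^a \le n^{a+1} \varepsilon^{a}$. -/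
/-!
A covering configuration can advance by at most `2r` per sensor, so `b i ≤ (2i - 1) r` counting
from the left end and `1 - (2(n - i) + 1) r ≤ b i` counting from the right end. For
`r = 1/(2n) + ε/2` these two bounds are `tᵢ + (2i - 1) ε/2` and `tᵢ - (2(n - i) + 1) ε/2`,
both within `n ε` of the anchor `tᵢ`.
-/

open Finset

theorem sub_le_mul_of_forall_succ_sub_le {b : ℕ → ℝ} {c : ℝ} {i j : ℕ} (hij : i ≤ j)
    (h : ∀ k ∈ Ico i j, b (k + 1) - b k ≤ c) : b j - b i ≤ ((j : ℝ) - i) * c := by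
  induction j, hij using Nat.le_induction with
  | base => simp
  | succ j hij ih =>
    have hstep := h j (mem_Ico.2 ⟨hij, j.lt_succ_self⟩)
    have hprev := ih fun k hk => h k (Ico_subset_Ico_right j.le_succ hk)
    push_cast
    linarith

section Covering

variable {n i : ℕ} {r : ℝ} {b : ℕ → ℝ}
  (hgap : ∀ k ∈ Icc 1 (n - 1), b (k + 1) - b k ≤ 2 * r)
include hgap

theorem le_of_covers_left (hleft : b 1 ≤ r) (hi : i ∈ Icc 1 n) :
    b i ≤ (2 * (i : ℝ) - 1) * r := by
  obtain ⟨h1, hn⟩ := mem_Icc.1 hi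
  have := sub_le_mul_of_forall_succ_sub_le h1 fun k hk => by
    obtain ⟨hk1, hki⟩ := mem_Ico.1 hk
    exact hgap k (mem_Icc.2 ⟨hk1, by omega⟩)
  push_cast at this
  linarith

theorem ge_of_covers_right (hright : 1 - b n ≤ r) (hi : i ∈ Icc 1 n) :
    1 - (2 * ((n : ℝ) - i) + 1) * r ≤ b i := by
  obtain ⟨h1, hn⟩ := mem_Icc.1 hi
  have := sub_le_mul_of_forall_succ_sub_le hn fun k hk => by
    obtain ⟨hik, hkn⟩ := mem_Ico.1 hk
    exact hgap k (mem_Icc.2 ⟨by omega, by omega⟩)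
  linarith

end Covering

theorem abs_sub_anchor_le {n i : ℕ} {ε : ℝ} {b : ℕ → ℝ} (hε : 0 ≤ ε)
    (hgap : ∀ k ∈ Icc 1 (n - 1), b (k + 1) - b k ≤ 2 * (1 / (2 * n) + ε / 2))
    (hleft : b 1 ≤ 1 / (2 * n) + ε / 2) (hright : 1 - b n ≤ 1 / (2 * n) + ε / 2)
    (hi : i ∈ Icc 1 n) : |b i - (2 * (i : ℝ) - 1) / (2 * n)| ≤ n * ε := by
  have upper := le_of_covers_left hgap hleft hi
  have lower := ge_of_covers_right hgap hright hi
  obtain ⟨h1, hn⟩ := mem_Icc.1 hi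
  have hi1 : (1 : ℝ) ≤ i := by exact_mod_cast h1
  have hin : (i : ℝ) ≤ n := by exact_mod_cast hn
  have hn0 : (n : ℝ) ≠ 0 := by exact_mod_cast (by omega : n ≠ 0)
  have hcomplement :
      (2 * ((n : ℝ) - i) + 1) * (1 / (2 * n)) = 1 - (2 * (i : ℝ) - 1) * (1 / (2 * n)) := by
    field_simp; ring
  rw [abs_le, ← mul_one_div]
  constructor <;> linarith [mul_nonneg (sub_nonneg.2 hin) hε, mul_nonneg (sub_nonneg.2 hi1) hε]

theorem stmt5_general (a : ℕ) (n : ℕ) (ε : ℝ) (hε : 0 < ε)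
    (b : ℕ → ℝ)
    (hleft : b 1 ≤ 1 / (2 * n) + ε / 2)
    (hright : 1 - b n ≤ 1 / (2 * n) + ε / 2)
    (hgap : ∀ i ∈ Finset.Icc 1 (n - 1), b (i + 1) - b i ≤ 2 * (1 / (2 * n) + ε / 2)) :
    (∀ i ∈ Finset.Icc 1 n, |b i - (2 * (i : ℝ) - 1) / (2 * n)| ≤ n * ε) ∧
    ∑ i ∈ Finset.Icc 1 n, |b i - (2 * (i : ℝ) - 1) / (2 * n)| ^ a
      ≤ (n : ℝ) ^ (a + 1) * ε ^ a := by
  have key := fun i => abs_sub_anchor_le (i := i) hε.le hgap hleft hright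
  refine ⟨key, ?_⟩
  calc ∑ i ∈ Icc 1 n, |b i - (2 * (i : ℝ) - 1) / (2 * n)| ^ a
      ≤ #(Icc 1 n) • ((n : ℝ) * ε) ^ a :=
        sum_le_card_nsmul _ _ _ fun i hi => pow_le_pow_left₀ (abs_nonneg _) (key i hi) a
    _ = (n : ℝ) ^ (a + 1) * ε ^ a := by
        rw [Nat.card_Icc, nsmul_eq_mul, mul_pow, pow_succ]
        push_cast
        ring

/-- For a positive integer `a`, `n ≥ 1`, `ε > 0`, radius
`r = 1/(2n) + ε/2`, and anchors `tᵢ = (2i-1)/(2n)`: every covering configuration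
`0 ≤ b₁ ≤ ⋯ ≤ bₙ ≤ 1` (with `b₁ ≤ r`, `1 - bₙ ≤ r`, `b_{i+1} - bᵢ ≤ 2r`) satisfies
`|bᵢ - tᵢ| ≤ n ε` for all `i`, hence `∑ᵢ |bᵢ - tᵢ|ᵃ ≤ n^{a+1} εᵃ`. -/
theorem stmt5 (a : ℕ) (ha : 0 < a) (n : ℕ) (hn : 1 ≤ n) (ε : ℝ) (hε : 0 < ε)
    (b : ℕ → ℝ)
    (hb0 : 0 ≤ b 1) (hb1 : b n ≤ 1)
    (hmono : ∀ i ∈ Finset.Icc 1 (n - 1), b i ≤ b (i + 1))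
    (hleft : b 1 ≤ 1 / (2 * n) + ε / 2)
    (hright : 1 - b n ≤ 1 / (2 * n) + ε / 2)
    (hgap : ∀ i ∈ Finset.Icc 1 (n - 1), b (i + 1) - b i ≤ 2 * (1 / (2 * n) + ε / 2)) :
    (∀ i ∈ Finset.Icc 1 n, |b i - (2 * (i : ℝ) - 1) / (2 * n)| ≤ n * ε) ∧
    ∑ i ∈ Finset.Icc 1 n, |b i - (2 * (i : ℝ) - 1) / (2 * n)| ^ a
      ≤ (n : ℝ) ^ (a + 1) * ε ^ a :=
  stmt5_general a n ε hε b hleft hright hgap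
end

section
/- Let $a > 0$ be a real number. There exist a constant $C > 0$ and $N$ such that for all integers $m \ge N$ and all reals $x > 0$ the following holds: if $Y_{(1)} \le \dots \le Y_{(m)}$ are the order statistics of $m$ points placed independently and uniformly at random on the interval $[0, x]$, and $s_i = \frac{(2i-1)x}{2m}$ for $i = 1, \dots, m$ are the equidistant positions in $[0,x]$ at spacing $x/m$, then $\sum_{i=1}^{m} \mathbb{E}|Y_{(i)} - s_i|^a \le C \, x^{a} \, m^{1 - a/2}$. -/
/-!
Write `m = n + 1`. The identity `i · C(m, i) = m · C(n, i - 1)` turns the sum of the Beta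
densities at a point `u` into `m` times the expectation of `|u - (2J + 1)/(2m)|^a` for
`J ~ Bin(n, u)`, and `|u - (2J + 1)/(2m)| ≤ (|J - nu| + 1)/m`. With `λ = m^{-1/2}`, the bound
`t^a ≤ k! e^t` (for an integer `k ≥ a`) and the moment generating function estimate
`E e^{±λ(J - nu)} ≤ e^{nλ²} ≤ e` make this expectation `O(m^{-a/2})` uniformly in `u`;
integrating over `u ∈ [0, 1]` and scaling by `x^a` gives the claim.
-/

open Real Finset
open scoped Nat

lemma exp_sub_one_sub_le_sq {l : ℝ} (hl : |l| ≤ 1) : exp l - 1 - l ≤ l ^ 2 :=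
  (abs_le.mp (abs_exp_sub_one_sub_id_le hl)).2

lemma rpow_le_factorial_mul_exp {a : ℝ} (ha : 0 ≤ a) {k : ℕ} (hak : a ≤ k) {t : ℝ} (ht : 0 ≤ t) :
    t ^ a ≤ k ! * exp t := by
  rcases le_or_gt t 1 with ht₁ | ht₁
  · calc t ^ a ≤ 1 := rpow_le_one ht ht₁ ha
      _ ≤ k ! * exp t := one_le_mul_of_one_le_of_one_le (by exact_mod_cast k.factorial_pos)
          (one_le_exp ht)
  · calc t ^ a ≤ t ^ (k : ℝ) := rpow_le_rpow_of_exponent_le ht₁.le hak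
      _ = t ^ k := rpow_natCast t k
      _ ≤ k ! * exp t := by
          have := pow_div_factorial_le_exp t ht k
          rwa [div_le_iff₀ (by positivity), mul_comm] at this

noncomputable def binomialMean (n : ℕ) (u : ℝ) (f : ℕ → ℝ) : ℝ :=
  ∑ j ∈ range (n + 1), (n.choose j : ℝ) * u ^ j * (1 - u) ^ (n - j) * f j

section binomialMean

variable {n : ℕ} {u : ℝ}

lemma binomialMean_add (f g : ℕ → ℝ) :
    binomialMean n u (fun j => f j + g j) = binomialMean n u f + binomialMean n u g := by
  simp only [binomialMean, mul_add, sum_add_distrib]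

lemma binomialMean_const_mul (c : ℝ) (f : ℕ → ℝ) :
    binomialMean n u (fun j => c * f j) = c * binomialMean n u f := by
  simp only [binomialMean, mul_sum]
  exact sum_congr rfl fun j _ => by ring

lemma binomialMean_mono (hu₀ : 0 ≤ u) (hu₁ : u ≤ 1) {f g : ℕ → ℝ} (hfg : ∀ j, f j ≤ g j) :
    binomialMean n u f ≤ binomialMean n u g :=
  sum_le_sum fun j _ => mul_le_mul_of_nonneg_left (hfg j) (by
    have : 0 ≤ 1 - u := by linarith
    positivity)

lemma binomialMean_exp_le (hu₀ : 0 ≤ u) (hu₁ : u ≤ 1) {l : ℝ} (hl : |l| ≤ 1) :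
    binomialMean n u (fun j => exp (l * (j - n * u))) ≤ exp (n * l ^ 2) := by
  have hfactor : binomialMean n u (fun j => exp (l * (j - n * u)))
      = exp (-(l * n * u)) * (u * exp l + (1 - u)) ^ n := by
    rw [add_pow, mul_sum, binomialMean]
    refine sum_congr rfl fun j _ => ?_
    rw [show l * (j - n * u) = j * l + -(l * n * u) by ring, exp_add, exp_nat_mul, mul_pow]
    ring
  have hbase : u * exp l + (1 - u) ≤ exp (u * (exp l - 1)) := by
    linarith [add_one_le_exp (u * (exp l - 1))]
  have hexp : (n : ℝ) * u * (exp l - 1 - l) ≤ n * l ^ 2 := by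
    have : (n : ℝ) * u ≤ n := mul_le_of_le_one_right n.cast_nonneg hu₁
    nlinarith [exp_sub_one_sub_le_sq hl, sq_nonneg l, mul_nonneg n.cast_nonneg hu₀]
  calc binomialMean n u (fun j => exp (l * (j - n * u)))
      = exp (-(l * n * u)) * (u * exp l + (1 - u)) ^ n := hfactor
    _ ≤ exp (-(l * n * u)) * exp (u * (exp l - 1)) ^ n := by gcongr
    _ = exp (n * u * (exp l - 1 - l)) := by
        rw [← exp_nat_mul, ← exp_add]; ring_nf
    _ ≤ exp (n * l ^ 2) := exp_le_exp.mpr hexp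

lemma binomialMean_rpow_le (hu₀ : 0 ≤ u) (hu₁ : u ≤ 1) {l : ℝ} (hl₀ : 0 ≤ l)
    (hl₁ : l ≤ 1) (hnl : n * l ^ 2 ≤ 1) {a : ℝ} (ha : 0 ≤ a) {k : ℕ} (hak : a ≤ k) :
    binomialMean n u (fun j => (l * (|j - n * u| + 1)) ^ a) ≤ 2 * exp 1 ^ 2 * k ! := by
  have hpoint : ∀ j : ℕ, (l * (|j - n * u| + 1)) ^ a
      ≤ k ! * exp 1 * (exp (l * (j - n * u)) + exp (-l * (j - n * u))) := by
    intro j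
    set z : ℝ := j - n * u
    have hexp_abs : exp (l * |z|) ≤ exp (l * z) + exp (-l * z) := by
      rcases abs_cases z with ⟨h, _⟩ | ⟨h, _⟩
      · rw [h]; linarith [exp_pos (-l * z)]
      · rw [h, mul_neg, ← neg_mul]; linarith [exp_pos (l * z)]
    calc (l * (|z| + 1)) ^ a ≤ k ! * exp (l * (|z| + 1)) :=
          rpow_le_factorial_mul_exp ha hak (by positivity)
      _ = k ! * exp l * exp (l * |z|) := by rw [mul_add, mul_one, exp_add]; ring
      _ ≤ k ! * exp 1 * (exp (l * z) + exp (-l * z)) := by gcongr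
  have hmgf : ∀ l' : ℝ, |l'| = l → binomialMean n u (fun j => exp (l' * (j - n * u))) ≤ exp 1 :=
    fun l' hl' => (binomialMean_exp_le hu₀ hu₁ (hl'.trans_le hl₁)).trans
      (exp_le_exp.mpr (by rwa [← sq_abs, hl']))
  calc binomialMean n u (fun j => (l * (|j - n * u| + 1)) ^ a)
      ≤ binomialMean n u
          (fun j => k ! * exp 1 * (exp (l * (j - n * u)) + exp (-l * (j - n * u)))) :=
        binomialMean_mono hu₀ hu₁ hpoint
    _ = k ! * exp 1 * (binomialMean n u (fun j => exp (l * (j - n * u)))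
          + binomialMean n u (fun j => exp (-l * (j - n * u)))) := by
        rw [binomialMean_const_mul, binomialMean_add]
    _ ≤ k ! * exp 1 * (exp 1 + exp 1) := by
        gcongr
        · exact hmgf l (abs_of_nonneg hl₀)
        · exact hmgf (-l) (by rw [abs_neg, abs_of_nonneg hl₀])
    _ = 2 * exp 1 ^ 2 * k ! := by ring

end binomialMean

lemma sum_Icc_mul_choose_eq_binomialMean (n : ℕ) (u : ℝ) (g : ℕ → ℝ) :
    ∑ i ∈ Icc 1 (n + 1), (i : ℝ) * ((n + 1).choose i : ℝ) *
        (g i * u ^ (i - 1) * (1 - u) ^ (n + 1 - i))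
      = (n + 1) * binomialMean n u (fun j => g (j + 1)) := by
  rw [← Ico_add_one_right_eq_Icc, sum_Ico_eq_sum_range, binomialMean, mul_sum,
    add_tsub_cancel_right]
  refine sum_congr rfl fun j _ => ?_
  have hchoose : ((n + 1 : ℕ) : ℝ) * n.choose j = (n + 1).choose (j + 1) * ((j + 1 : ℕ) : ℝ) := by
    exact_mod_cast Nat.add_one_mul_choose_eq n j
  rw [add_comm 1 j, add_tsub_cancel_right, Nat.add_sub_add_right]
  push_cast at hchoose ⊢
  linear_combination (u ^ j * (1 - u) ^ (n - j) * g (j + 1)) * hchoose.symm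

lemma abs_sub_midpoint_le {n j : ℕ} {u : ℝ} (hu₀ : 0 ≤ u) (hu₁ : u ≤ 1) :
    |u - (2 * ((j : ℝ) + 1) - 1) / (2 * ((n : ℝ) + 1))| ≤ (|j - n * u| + 1) / (n + 1) := by
  have hsplit : u - (2 * ((j : ℝ) + 1) - 1) / (2 * ((n : ℝ) + 1))
      = (-(j - n * u) + (u - 1 / 2)) / (n + 1) := by
    field_simp; ring
  have hhalf : |u - 1 / 2| ≤ 1 := abs_le.mpr ⟨by linarith, by linarith⟩
  rw [hsplit, abs_div, abs_of_pos (by positivity : (0 : ℝ) < n + 1)]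
  gcongr
  exact (abs_add_le _ _).trans (by rw [abs_neg]; linarith)

lemma sum_orderStatDensity_rpow_le {n : ℕ} {u : ℝ} (hu₀ : 0 ≤ u) (hu₁ : u ≤ 1) {a : ℝ}
    (ha : 0 ≤ a) {k : ℕ} (hak : a ≤ k) :
    ∑ i ∈ Icc 1 (n + 1), (i : ℝ) * ((n + 1).choose i : ℝ) *
        (|u - (2 * (i : ℝ) - 1) / (2 * ((n + 1 : ℕ) : ℝ))| ^ a *
          u ^ (i - 1) * (1 - u) ^ (n + 1 - i))
      ≤ (n + 1) * ((√(n + 1))⁻¹ ^ a * (2 * exp 1 ^ 2 * k !)) := by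
  set l : ℝ := (√(n + 1))⁻¹
  have hl₀ : 0 ≤ l := by positivity
  have hl_sq : l ^ 2 = ((n : ℝ) + 1)⁻¹ := by rw [inv_pow, sq_sqrt (by positivity)]
  have hl₁ : l ≤ 1 := inv_le_one_of_one_le₀ (one_le_sqrt.mpr (by linarith [n.cast_nonneg (α := ℝ)]))
  have hnl : n * l ^ 2 ≤ 1 := by
    rw [hl_sq, ← div_eq_mul_inv, div_le_one (by positivity)]; linarith
  have hpoint : ∀ j : ℕ, |u - (2 * ((j + 1 : ℕ) : ℝ) - 1) / (2 * ((n + 1 : ℕ) : ℝ))| ^ a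
      ≤ l ^ a * (l * (|j - n * u| + 1)) ^ a := by
    intro j
    rw [← mul_rpow hl₀ (by positivity), ← mul_assoc, ← sq, hl_sq, inv_mul_eq_div]
    push_cast
    exact rpow_le_rpow (abs_nonneg _) (abs_sub_midpoint_le hu₀ hu₁) ha
  rw [sum_Icc_mul_choose_eq_binomialMean]
  gcongr
  calc _ ≤ binomialMean n u (fun j => l ^ a * (l * (|j - n * u| + 1)) ^ a) :=
        binomialMean_mono hu₀ hu₁ hpoint
    _ ≤ l ^ a * (2 * exp 1 ^ 2 * k !) := by
        rw [binomialMean_const_mul]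
        gcongr
        exact binomialMean_rpow_le hu₀ hu₁ hl₀ hl₁ hnl ha hak

lemma abs_mul_sub_mul_div_rpow {x : ℝ} (hx : 0 < x) (u c d a : ℝ) :
    |x * u - c * x / d| ^ a = x ^ a * |u - c / d| ^ a := by
  rw [show x * u - c * x / d = x * (u - c / d) by ring, abs_mul, abs_of_pos hx,
    mul_rpow hx.le (abs_nonneg _)]

lemma mul_inv_sqrt_rpow {m : ℝ} (hm : 0 < m) (a : ℝ) : m * (√m)⁻¹ ^ a = m ^ (1 - a / 2) := by
  rw [sqrt_eq_rpow, ← rpow_neg hm.le, ← rpow_mul hm.le, sub_eq_add_neg, rpow_add hm, rpow_one]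
  ring_nf

/-- For real `a > 0` there are `C > 0` and `N` such that for all `m ≥ N`
and all `x > 0`: if `m` points are placed i.i.d. uniformly on `[0, x]`, the expected sum of
`a`-th powers of distances of the order statistics (here `Y₍ᵢ₎ = x · X₍ᵢ₎` with `X₍ᵢ₎`
Beta(i, m-i+1)-distributed) to the equidistant positions `sᵢ = (2i-1)x/(2m)` is at most
`C xᵃ m^{1 - a/2}`. Powers with real exponent `a` are real powers. -/
theorem stmt8 (a : ℝ) (ha : 0 < a) :
    ∃ C > 0, ∃ N : ℕ, ∀ m : ℕ, N ≤ m → ∀ x : ℝ, 0 < x →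
      (∑ i ∈ Finset.Icc 1 m, (i : ℝ) * (m.choose i : ℝ) *
          ∫ u in (0:ℝ)..1,
            |x * u - (2 * (i : ℝ) - 1) * x / (2 * m)| ^ a * u ^ (i - 1) * (1 - u) ^ (m - i))
        ≤ C * x ^ a * (m : ℝ) ^ ((1 : ℝ) - a / 2) := by
  obtain ⟨k, hak⟩ := exists_nat_ge a
  refine ⟨2 * exp 1 ^ 2 * k !, by positivity, 1, fun m hm x hx => ?_⟩
  obtain ⟨n, rfl⟩ := Nat.exists_eq_add_of_le' hm
  set f : ℕ → ℝ → ℝ := fun i u => (i : ℝ) * ((n + 1).choose i : ℝ) *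
    (|u - (2 * (i : ℝ) - 1) / (2 * ((n + 1 : ℕ) : ℝ))| ^ a * u ^ (i - 1) * (1 - u) ^ (n + 1 - i))
  have hf : ∀ i, Continuous (f i) := fun i => by
    have : Continuous fun u : ℝ => |u - (2 * (i : ℝ) - 1) / (2 * ((n + 1 : ℕ) : ℝ))| ^ a :=
      Continuous.rpow_const (by fun_prop) fun _ => Or.inr ha.le
    fun_prop
  calc _ = x ^ a * ∫ u in (0:ℝ)..1, ∑ i ∈ Icc 1 (n + 1), f i u := by
        rw [intervalIntegral.integral_finsetSum fun i _ => (hf i).intervalIntegrable 0 1, mul_sum]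
        refine sum_congr rfl fun i _ => ?_
        simp only [f, abs_mul_sub_mul_div_rpow hx, mul_assoc, intervalIntegral.integral_const_mul]
        ring
    _ ≤ x ^ a * (((n + 1 : ℕ) : ℝ) * ((√((n + 1 : ℕ) : ℝ))⁻¹ ^ a * (2 * exp 1 ^ 2 * k !))) := by
        gcongr
        have := intervalIntegral.integral_mono_on (μ := MeasureTheory.volume) zero_le_one
          ((continuous_finsetSum _ fun i _ => hf i).intervalIntegrable 0 1) intervalIntegrable_const
          fun u hu => sum_orderStatDensity_rpow_le hu.1 hu.2 ha.le hak
        simpa using this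
    _ = 2 * exp 1 ^ 2 * k ! * x ^ a * ((n + 1 : ℕ) : ℝ) ^ (1 - a / 2) := by
        rw [← mul_inv_sqrt_rpow (by positivity) a]; ring
end

section
/- Fix a real number $a > 0$ and set $p = \frac{9}{4}(2+a)$. Let $x_0 \ge 3$ be the real solution of $\frac{x}{p \ln x} = 3$. Then for every integer $n \ge \lceil x_0 \rceil$, if $n$ points $X_1, \dots, X_n$ are placed independently and uniformly at random on $[0,1]$, and $[0,1]$ is partitioned into $N = \lfloor \frac{n}{p \ln n} \rfloor$ consecutive subintervals each of length $\frac{1}{N}$, then the probability that some subinterval contains fewer than $\frac{n}{3N}$ of the points is less than $\frac{N}{n^{1 + a/2}}$. -/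
open MeasureTheory
open scoped Classical

/-- The `j`-th of `N` consecutive subintervals of `[0,1]` of length `1/N`
(`j = 1, …, N`; the last one is taken closed). -/
def subInterval (N j : ℕ) : Set ℝ :=
  if j < N then Set.Ico (((j : ℝ) - 1) / N) ((j : ℝ) / N)
  else Set.Icc (((j : ℝ) - 1) / N) 1

/-- The uniform (product Lebesgue) probability measure on `[0,1]ⁿ`. -/
noncomputable def uniformCube (n : ℕ) : Measure (Fin n → ℝ) :=
  Measure.pi fun _ => volume.restrict (Set.Icc 0 1)

/-! The number of points in a fixed subinterval is a sum of `n` independent indicators, so the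
Chernoff bound with parameter `t = -log 3` gives
`P(count ≤ m) ≤ 3^m (1 - 2/(3N))^n ≤ exp (m log 3 - 2n/(3N))`.
For `m = n/(3N)` and `q = n/N ≥ p log n` the exponent is `-(2 - log 3) q/3 < -(1 + a/2) log n`,
because `log 3 < 4/3`; a union bound over the `N` subintervals finishes. The choice of `x₀`
together with the monotonicity of `x / log x` beyond `e` makes `n/(p log n) ≥ 3`, so `N ≥ 1`. -/

open ProbabilityTheory Real Finset

lemma card_filter_mem_eq_sum_indicator {α ι : Type*} [Fintype ι] (S : Set α) (X : ι → α) :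
    (#{i | X i ∈ S} : ℝ) = ∑ i, S.indicator 1 (X i) := by
  simp [Set.indicator_apply, Finset.sum_boole]

section Chernoff

variable {α ι : Type*} [MeasurableSpace α] [Fintype ι] {μ : Measure α} [IsProbabilityMeasure μ]
  {S : Set α}

lemma mgf_indicator_one (hS : MeasurableSet S) (t : ℝ) :
    mgf (S.indicator 1) μ t = 1 + (exp t - 1) * μ.real S := by
  have h : (fun x => exp (t * S.indicator 1 x))
      = fun x => 1 + S.indicator (fun _ => exp t - 1) x := by
    ext x
    by_cases hx : x ∈ S <;> simp [hx]
  rw [mgf, h, integral_add (integrable_const 1) ((integrable_const _).indicator hS),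
    integral_indicator_const _ hS]
  simp [mul_comm]

lemma mgf_card_filter_mem (t : ℝ) :
    mgf (fun X : ι → α => (#{i | X i ∈ S} : ℝ)) (Measure.pi fun _ => μ) t
      = mgf (S.indicator 1) μ t ^ Fintype.card ι := by
  simp_rw [mgf, card_filter_mem_eq_sum_indicator, mul_sum, exp_sum]
  exact integral_fintype_prod_eq_pow fun x => exp (t * S.indicator 1 x)

theorem measureReal_card_filter_mem_le_le (hS : MeasurableSet S) {t : ℝ} (ht : t ≤ 0) (m : ℝ) :
    (Measure.pi fun _ : ι => μ).real {X | (#{i | X i ∈ S} : ℝ) ≤ m}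
      ≤ exp (-t * m + (exp t - 1) * Fintype.card ι * μ.real S) := by
  have hmeas : Measurable fun X : ι → α => (#{i | X i ∈ S} : ℝ) := by
    simp_rw [card_filter_mem_eq_sum_indicator]
    exact Finset.measurable_sum _ fun i _ =>
      (measurable_one.indicator hS).comp (measurable_pi_apply i)
  have hint : Integrable (fun X : ι → α => exp (t * #{i | X i ∈ S})) (Measure.pi fun _ => μ) := by
    refine .of_bound (hmeas.const_mul t).exp.aestronglyMeasurable 1 (.of_forall fun X => ?_)
    rw [norm_of_nonneg (exp_pos _).le, exp_le_one_iff]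
    exact mul_nonpos_of_nonpos_of_nonneg ht (Nat.cast_nonneg _)
  have hmgf : mgf (S.indicator 1) μ t ^ Fintype.card ι
      ≤ exp ((exp t - 1) * Fintype.card ι * μ.real S) := by
    calc mgf (S.indicator 1) μ t ^ Fintype.card ι
        ≤ exp ((exp t - 1) * μ.real S) ^ Fintype.card ι := by
          gcongr
          · exact mgf_nonneg
          · rw [mgf_indicator_one hS, add_comm]
            exact add_one_le_exp _
      _ = _ := by rw [← exp_nat_mul]; ring_nf
  calc _ ≤ exp (-t * m) * mgf (fun X : ι → α => (#{i | X i ∈ S} : ℝ)) (Measure.pi fun _ => μ) t :=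
        measure_le_le_exp_mul_mgf m ht hint
    _ ≤ _ := by
        rw [mgf_card_filter_mem, exp_add]
        gcongr

end Chernoff

instance : IsProbabilityMeasure (volume.restrict (Set.Icc (0 : ℝ) 1)) :=
  ⟨by simp⟩

instance (n : ℕ) : IsProbabilityMeasure (uniformCube n) := by
  unfold uniformCube
  infer_instance

lemma measurableSet_subInterval (N j : ℕ) : MeasurableSet (subInterval N j) := by
  unfold subInterval
  split_ifs
  exacts [measurableSet_Ico, measurableSet_Icc]

lemma subInterval_subset_Icc {N j : ℕ} (hj : 1 ≤ j) (hjN : j ≤ N) :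
    subInterval N j ⊆ Set.Icc 0 1 := by
  have hN : (0 : ℝ) < N := by exact_mod_cast hj.trans hjN
  have hj' : (1 : ℝ) ≤ j := by exact_mod_cast hj
  have hjN' : (j : ℝ) / N ≤ 1 := (div_le_one hN).mpr (by exact_mod_cast hjN)
  have hleft : 0 ≤ ((j : ℝ) - 1) / N := div_nonneg (by linarith) hN.le
  unfold subInterval
  split_ifs
  · exact Set.Ico_subset_Icc_self.trans (Set.Icc_subset_Icc hleft hjN')
  · exact Set.Icc_subset_Icc_left hleft

lemma measureReal_subInterval {N j : ℕ} (hj : 1 ≤ j) (hjN : j ≤ N) :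
    (volume.restrict (Set.Icc (0 : ℝ) 1)).real (subInterval N j) = 1 / N := by
  have hN : (N : ℝ) ≠ 0 := Nat.cast_ne_zero.mpr (by omega)
  rw [measureReal_restrict_apply (measurableSet_subInterval N j),
    Set.inter_eq_self_of_subset_left (subInterval_subset_Icc hj hjN), subInterval]
  split_ifs with h
  · rw [Real.volume_real_Ico_of_le (by gcongr; linarith)]
    field_simp
    ring
  · obtain rfl : j = N := le_antisymm hjN (not_lt.mp h)
    rw [Real.volume_real_Icc_of_le (by rw [div_le_one (by positivity)]; linarith)]
    field_simp
    ring

lemma uniformCube_card_filter_mem_subInterval_le_le {n N j : ℕ} (hj : 1 ≤ j) (hjN : j ≤ N)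
    (m : ℝ) :
    uniformCube n {X | (#{i | X i ∈ subInterval N j} : ℝ) ≤ m}
      ≤ ENNReal.ofReal (exp (log 3 * m - 2 * n / (3 * N))) := by
  rw [← ofReal_measureReal, uniformCube]
  gcongr
  convert measureReal_card_filter_mem_le_le (μ := volume.restrict (Set.Icc (0 : ℝ) 1))
    (measurableSet_subInterval N j)
    (neg_nonpos.mpr (log_nonneg (by norm_num : (1 : ℝ) ≤ 3))) m using 2
  rw [measureReal_subInterval hj hjN, exp_neg, exp_log (by norm_num), Fintype.card_fin]
  ring

lemma uniformCube_exists_card_filter_mem_subInterval_lt_le (n N : ℕ) (m : ℝ) :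
    uniformCube n {X | ∃ j ∈ Finset.Icc 1 N, (#{i | X i ∈ subInterval N j} : ℝ) < m}
      ≤ N * ENNReal.ofReal (exp (log 3 * m - 2 * n / (3 * N))) := by
  calc _ ≤ uniformCube n
          (⋃ j ∈ Finset.Icc 1 N, {X | (#{i | X i ∈ subInterval N j} : ℝ) ≤ m}) := by
        gcongr
        intro X ⟨j, hj, hX⟩
        exact Set.mem_biUnion hj hX.le
    _ ≤ ∑ j ∈ Finset.Icc 1 N, uniformCube n {X | (#{i | X i ∈ subInterval N j} : ℝ) ≤ m} :=
        measure_biUnion_finset_le _ _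
    _ ≤ ∑ j ∈ Finset.Icc 1 N, ENNReal.ofReal (exp (log 3 * m - 2 * n / (3 * N))) :=
        Finset.sum_le_sum fun j hj =>
          uniformCube_card_filter_mem_subInterval_le_le (Finset.mem_Icc.mp hj).1
            (Finset.mem_Icc.mp hj).2 m
    _ = _ := by simp

lemma div_mul_log_le_div_mul_log {c x y : ℝ} (hc : 0 < c) (hx : exp 1 ≤ x) (hxy : x ≤ y) :
    x / (c * log x) ≤ y / (c * log y) := by
  have hx0 : 0 < x := (exp_pos 1).trans_le hx
  have hlogx : 0 < log x := log_pos ((one_lt_exp_iff.mpr one_pos).trans_le hx)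
  have hlogy : 0 < log y := hlogx.trans_le (log_le_log hx0 hxy)
  have h := log_div_self_antitoneOn hx (hx.trans hxy) hxy
  rw [div_le_div_iff₀ (hx0.trans_le hxy) hx0] at h
  rw [div_le_div_iff₀ (by positivity) (by positivity)]
  nlinarith

lemma log_three_mul_sub_lt {a L q : ℝ} (ha : 0 < 2 + a) (hL : 0 < L)
    (hq : 9 / 4 * (2 + a) * L ≤ q) :
    log 3 * (q / 3) - 2 * q / 3 < -((1 + a / 2) * L) := by
  nlinarith [log_three_lt_d9, mul_pos ha hL]

/-- Fix real `a > 0`, `p = (9/4)(2+a)`, and let `x₀ ≥ 3` solve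
`x₀/(p ln x₀) = 3`. For every `n ≥ ⌈x₀⌉`, placing `n` uniform points on `[0,1]` and
partitioning `[0,1]` into `N = ⌊n/(p ln n)⌋` equal subintervals, the probability that some
subinterval contains fewer than `n/(3N)` of the points is less than `N / n^{1+a/2}`. -/
theorem stmt9 (a : ℝ) (ha : 0 < a) (x₀ : ℝ) (hx₀ : 3 ≤ x₀)
    (hx₀eq : x₀ / ((9 / 4 * (2 + a)) * Real.log x₀) = 3)
    (n : ℕ) (hn : ⌈x₀⌉₊ ≤ n) :
    uniformCube n
      {X : Fin n → ℝ | ∃ j ∈ Finset.Icc 1 ⌊(n : ℝ) / ((9 / 4 * (2 + a)) * Real.log n)⌋₊,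
        ((Finset.univ.filter fun i : Fin n =>
            X i ∈ subInterval ⌊(n : ℝ) / ((9 / 4 * (2 + a)) * Real.log n)⌋₊ j).card : ℝ)
          < (n : ℝ) / (3 * (⌊(n : ℝ) / ((9 / 4 * (2 + a)) * Real.log n)⌋₊ : ℝ))}
      < ENNReal.ofReal
          ((⌊(n : ℝ) / ((9 / 4 * (2 + a)) * Real.log n)⌋₊ : ℝ) /
            (n : ℝ) ^ ((1 : ℝ) + a / 2)) := by
  set p : ℝ := 9 / 4 * (2 + a)
  set N : ℕ := ⌊(n : ℝ) / (p * log n)⌋₊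
  have hxn : x₀ ≤ n := (Nat.le_ceil x₀).trans (by exact_mod_cast hn)
  have hlog : 0 < log n := log_pos (by linarith)
  have hratio : 3 ≤ (n : ℝ) / (p * log n) :=
    hx₀eq ▸ div_mul_log_le_div_mul_log (by positivity) (by linarith [exp_one_lt_d9]) hxn
  have hN : (0 : ℝ) < N := by
    have : 1 ≤ N := Nat.le_floor (by push_cast; linarith)
    exact_mod_cast this
  have hq : p * log n ≤ n / N := by
    have := Nat.floor_le (a := (n : ℝ) / (p * log n)) (by linarith)
    rw [le_div_iff₀ hN]
    rw [le_div_iff₀ (by positivity)] at this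
    linarith
  have hexp : exp (log 3 * (n / (3 * N)) - 2 * n / (3 * N)) < ((n : ℝ) ^ (1 + a / 2))⁻¹ := by
    rw [← rpow_neg (by positivity), rpow_def_of_pos (by linarith)]
    refine exp_lt_exp.mpr ?_
    convert log_three_mul_sub_lt (by linarith) hlog hq using 1 <;> ring
  calc _ ≤ N * ENNReal.ofReal (exp (log 3 * (n / (3 * N)) - 2 * n / (3 * N))) :=
        uniformCube_exists_card_filter_mem_subInterval_lt_le n N _
    _ = ENNReal.ofReal (N * exp (log 3 * (n / (3 * N)) - 2 * n / (3 * N))) := by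
        rw [ENNReal.ofReal_mul (by positivity), ENNReal.ofReal_natCast]
    _ < _ := by
        rw [ENNReal.ofReal_lt_ofReal_iff (div_pos hN (rpow_pos_of_pos (by linarith) _)),
          div_eq_mul_inv]
        exact mul_lt_mul_of_pos_left hexp hN
end
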